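/- arXiv:2603.25007 — 10 statements merged into one kernel-verified Lean document; each statement's English description precedes it below -/
import Mathlib

section
/- If P = {(A_i, B_i) : i in [m]} is a skew Bollobás system of subsets of [n] (i.e., A_i ∩ B_i = ∅ for all i and A_i ∩ B_j ≠ ∅ for all i < j) with |A_i| = a and |B_i| = b for all i, then m ≤ binom(a+b, a). -/
/-!
Lovász's exterior-algebra argument. Place the ground set on the moment curve
`x ↦ (1, x, …, x^(a+b-1))` in `ℚ^(a+b)`, where any `a + b` points are linearly independent, and
let `α_i, β_j` be the wedge products of the points of `A_i` and `B_j`. Then `α_i ∧ β_j` vanishes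
for `i < j`, since the two sets share a point, and is nonzero for `i = j`, since `A_i ∪ B_i`
consists of `a + b` distinct points. This triangularity makes the `α_i` linearly independent
in `⋀^a ℚ^(a+b)`, a space of dimension `(a+b).choose a`.
-/

open Finset ExteriorAlgebra Set.powersetCard

theorem linearIndependent_of_triangular {ι K M N : Type*} [LinearOrder ι] [Field K]
    [AddCommGroup M] [Module K M] [AddCommGroup N] [Module K N]
    (f : ι → M) (ℓ : ι → M →ₗ[K] N) (hlt : ∀ i j, i < j → ℓ j (f i) = 0)
    (hdiag : ∀ i, ℓ i (f i) ≠ 0) : LinearIndependent K f := by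
  classical
  rw [linearIndependent_iff']
  intro s c hsum
  by_contra! hc
  set t := s.filter (c · ≠ 0)
  have ht : t.Nonempty := by simpa [Finset.Nonempty, t] using hc
  set j := t.max' ht
  obtain ⟨hjs, hcj⟩ := Finset.mem_filter.1 (t.max'_mem ht)
  have hterm : ∀ i ∈ s, i ≠ j → c i • ℓ j (f i) = 0 := fun i hi hij => by
    by_cases hci : c i = 0
    · rw [hci, zero_smul]
    · have hle : i ≤ j := t.le_max' i (Finset.mem_filter.2 ⟨hi, hci⟩)
      rw [hlt i j (lt_of_le_of_ne hle hij), smul_zero]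
  have hj := congrArg (ℓ j) hsum
  simp only [map_sum, map_smul, map_zero] at hj
  rw [Finset.sum_eq_single_of_mem j hjs hterm] at hj
  exact hdiag j ((smul_eq_zero.1 hj).resolve_left hcj)

section ExteriorAlgebra

variable {K V : Type*} [Field K] [AddCommGroup V] [Module K V]

theorem ExteriorAlgebra.ιMulti_ne_zero_of_linearIndependent {n : ℕ} {w : Fin n → V}
    (hw : LinearIndependent K w) : ιMulti K n w ≠ 0 := by
  have := (exteriorPower.ιMulti_family_linearIndependent_field (n := n) hw).ne_zero
    (ofFinEmbEquiv (OrderIso.refl (Fin n)).toOrderEmbedding)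
  rw [Ne, ← exteriorPower.ιMulti_apply_coe, Submodule.coe_eq_zero]
  simpa [exteriorPower.ιMulti_family] using this

theorem ExteriorAlgebra.ιMulti_family_ne_zero {I : Type*} [LinearOrder I] {n : ℕ} {v : I → V}
    (s : Set.powersetCard I n) (hv : LinearIndepOn K v (s : Finset I)) :
    ιMulti_family K n v s ≠ 0 :=
  ιMulti_ne_zero_of_linearIndependent (hv.comp _ (orderIsoOfFin s).injective)

variable {ι α : Type*} [LinearOrder ι] [LinearOrder α] {a b : ℕ} {v : α → V}
  {A B : ι → Finset α}

theorem linearIndependent_ιMulti_family_of_skew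
    (hv : ∀ s : Finset α, #s = a + b → LinearIndepOn K v s)
    (hA : ∀ i, #(A i) = a) (hB : ∀ i, #(B i) = b)
    (hdisj : ∀ i, Disjoint (A i) (B i)) (hcross : ∀ i j, i < j → ¬Disjoint (A i) (B j)) :
    LinearIndependent K fun i => exteriorPower.ιMulti_family K a v (ofCard (hA i)) := by
  refine linearIndependent_of_triangular _ (fun j => LinearMap.mulRight K
    (ιMulti_family K b v (ofCard (hB j))) ∘ₗ (⋀[K]^a V).subtype) ?_ ?_
  · intro i j hij
    exact ιMulti_family_mul_of_not_disjoint K v _ _ (hcross i j hij)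
  · intro i
    simp only [LinearMap.comp_apply, Submodule.coe_subtype, LinearMap.mulRight_apply,
      exteriorPower.ιMulti_family_apply_coe]
    rw [ιMulti_family_mul_of_disjoint K v _ _ (hdisj i), smul_ne_zero_iff_ne]
    exact ιMulti_family_ne_zero _ (hv _ (disjUnion (hdisj i)).prop)

theorem card_le_choose_finrank_of_skew [Fintype ι] [FiniteDimensional K V]
    (hv : ∀ s : Finset α, #s = a + b → LinearIndepOn K v s)
    (hA : ∀ i, #(A i) = a) (hB : ∀ i, #(B i) = b)
    (hdisj : ∀ i, Disjoint (A i) (B i)) (hcross : ∀ i j, i < j → ¬Disjoint (A i) (B j)) :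
    Fintype.card ι ≤ (Module.finrank K V).choose a :=
  (linearIndependent_ιMulti_family_of_skew hv hA hB hdisj hcross).fintype_card_le_finrank.trans
    (exteriorPower.finrank_eq K a).le

end ExteriorAlgebra

theorem linearIndepOn_pow_of_card_eq {K α : Type*} [Field K] {d : ℕ} {t : α → K}
    (ht : Function.Injective t) (s : Finset α) (hs : #s = d) :
    LinearIndepOn K (fun x (r : Fin d) => t x ^ (r : ℕ)) s := by
  classical
  set e := s.equivFinOfCardEq hs
  have hdet : (Matrix.vandermonde fun k => t (e.symm k)).det ≠ 0 :=
    Matrix.det_vandermonde_ne_zero_iff.2 (ht.comp (Subtype.val_injective.comp e.symm.injective))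
  have hrows := Matrix.linearIndependent_rows_of_isUnit
    ((Matrix.isUnit_iff_isUnit_det _).2 hdet.isUnit)
  refine (linearIndependent_equiv' e ?_).2 hrows
  ext x r
  change t (e.symm (e x)) ^ (r : ℕ) = _
  rw [e.symm_apply_apply]

theorem skew_bollobas_uniform (n m a b : ℕ)
    (A B : Fin m → Finset (Fin n))
    (hdisj : ∀ i, Disjoint (A i) (B i))
    (hcross : ∀ i j, i < j → (A i ∩ B j).Nonempty)
    (hA : ∀ i, (A i).card = a) (hB : ∀ i, (B i).card = b) :
    m ≤ (a + b).choose a := by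
  have hv := linearIndepOn_pow_of_card_eq (K := ℚ) (d := a + b)
    (t := fun x : Fin n => ((x : ℕ) : ℚ)) (Nat.cast_injective.comp Fin.val_injective)
  have := card_le_choose_finrank_of_skew hv hA hB hdisj
    fun i j hij => Finset.not_disjoint_iff_nonempty_inter.2 (hcross i j hij)
  simpa using this
end

section
/- Let [n] be the disjoint union of sets X_1, ..., X_r, and let P = {(A_i, B_i) : i in [m]} be a skew Bollobás system of subsets of [n] with |A_i ∩ X_k| = a_k and |B_i ∩ X_k| = b_k for all i ∈ [m] and k ∈ [r]. Then m ≤ ∏_{k=1}^r binom(a_k + b_k, a_k). -/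
/-!
Number the ground set by `v ↦ (v : ℝ)` and consider the `m × m` matrix
`M i j = ∏ₖ ∏_{u ∈ Aᵢ ∩ Xₖ} ∏_{v ∈ Bⱼ ∩ Xₖ} (u - v)`. It vanishes exactly when `Aᵢ ∩ Bⱼ ≠ ∅`, so
it is lower triangular with nonzero diagonal and has rank `m`. On the other hand, for each block
`∏_{u ∈ S} ∏_{v ∈ T} (u - v) = ∏_{u ∈ S} p_T(u)` with `p_T` of degree `b`; expanding the product over
the `a` points of `S` and grouping the terms by the multiset of exponents used shows that this is
`∑_μ L(S, μ) R(T, μ)` over multisets `μ` of size `a` from `{0, …, b}`, of which there are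
`(a + b).choose a`. Multiplying over the blocks factors `M` through a space of dimension
`∏ₖ (aₖ + bₖ).choose aₖ`.
-/

open Finset Polynomial

theorem Matrix.card_le_card_of_mul_isLowerTriangular {m ι K : Type*} [Fintype m] [LinearOrder m]
    [Fintype ι] [Field K] (U : Matrix m ι K) (V : Matrix ι m K)
    (hT : (U * V).IsLowerTriangular) (hd : ∀ i, (U * V) i i ≠ 0) :
    Fintype.card m ≤ Fintype.card ι := by
  have hdet : (U * V).det ≠ 0 := by
    simpa [det_of_isLowerTriangular _ hT, prod_ne_zero_iff] using hd
  calc Fintype.card m = (U * V).rank :=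
        (rank_of_isUnit _ ((isUnit_iff_isUnit_det _).2 hdet.isUnit)).symm
    _ ≤ U.rank := rank_mul_le_left U V
    _ ≤ Fintype.card ι := rank_le_card_width U

theorem Fintype.prod_sum_mul_eq_sum_sym {σ ι R : Type*} [Fintype σ] [DecidableEq σ] [Fintype ι]
    [DecidableEq ι] [CommSemiring R] {a : ℕ} (hσ : Fintype.card σ = a) (c : ι → R)
    (x : σ → ι → R) :
    ∏ u, ∑ d, c d * x u d = ∑ μ : Sym ι a, ((μ : Multiset ι).map c).prod *
      ∑ g : σ → ι with univ.val.map g = μ, ∏ u, x u (g u) := by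
  let content : (σ → ι) → Sym ι a := fun g => ⟨univ.val.map g, by simp [hσ]⟩
  rw [Fintype.prod_sum, ← Finset.sum_fiberwise univ content fun g => ∏ u, c (g u) * x u (g u)]
  refine Finset.sum_congr rfl fun μ _ => ?_
  rw [mul_sum]
  refine Finset.sum_congr (filter_congr fun g _ => Sym.coe_inj.symm) fun g hg => ?_
  have hμ : univ.val.map g = (μ : Multiset ι) := (mem_filter.1 hg).2
  rw [prod_mul_distrib, ← hμ, Multiset.map_map]
  rfl

theorem Polynomial.eval_prod_X_sub_C_eq_sum_fin {α R : Type*} [CommRing R] (f : α → R)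
    {t : Finset α} {b : ℕ} (ht : t.card = b) (x : R) :
    ∏ v ∈ t, (x - f v) = ∑ d : Fin (b + 1), (∏ v ∈ t, (X - C (f v))).coeff d * x ^ (d : ℕ) := by
  have hdeg : (∏ v ∈ t, (X - C (f v))).natDegree < b + 1 := by
    refine Nat.lt_succ_of_le ((natDegree_prod_le _ _).trans ?_)
    simpa [ht] using sum_le_sum fun v (_ : v ∈ t) => natDegree_X_sub_C_le (f v)
  calc ∏ v ∈ t, (x - f v) = (∏ v ∈ t, (X - C (f v))).eval x := by simp [eval_prod]
    _ = _ := by rw [eval_eq_sum_range' hdeg, ← Fin.sum_univ_eq_sum_range]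

theorem exists_sym_factorization_prod_prod_sub {α R : Type*} [CommRing R] (f : α → R)
    (a b : ℕ) : ∃ L M : Finset α → Sym (Fin (b + 1)) a → R, ∀ s t : Finset α,
      s.card = a → t.card = b → ∏ u ∈ s, ∏ v ∈ t, (f u - f v) = ∑ μ, L s μ * M t μ := by
  classical
  refine ⟨fun s μ => ∑ g : s → Fin (b + 1) with univ.val.map g = μ, ∏ u : s, f u ^ (g u : ℕ),
    fun t μ => ((μ : Multiset (Fin (b + 1))).map fun d => (∏ v ∈ t, (X - C (f v))).coeff d).prod,
    fun s t hs ht => ?_⟩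
  rw [← prod_coe_sort s]
  simp_rw [eval_prod_X_sub_C_eq_sum_fin f ht]
  rw [Fintype.prod_sum_mul_eq_sum_sym (by simpa using hs)]
  exact sum_congr rfl fun μ _ => mul_comm _ _

theorem prod_prod_sub_eq_zero_iff {α R : Type*} [CommRing R] [IsDomain R] [DecidableEq α]
    {f : α → R} (hf : Function.Injective f) {s t : Finset α} :
    ∏ u ∈ s, ∏ v ∈ t, (f u - f v) = 0 ↔ (s ∩ t).Nonempty := by
  simp [prod_eq_zero_iff, sub_eq_zero, hf.eq_iff, Finset.Nonempty]

theorem prod_prod_prod_sub_inter_eq_zero_iff {α κ R : Type*} [CommRing R] [IsDomain R]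
    [Fintype κ] [DecidableEq α] {f : α → R} (hf : Function.Injective f) {X : κ → Finset α}
    (hX : ∀ x, ∃ k, x ∈ X k) {s t : Finset α} :
    ∏ k, ∏ u ∈ s ∩ X k, ∏ v ∈ t ∩ X k, (f u - f v) = 0 ↔ (s ∩ t).Nonempty := by
  simp_rw [prod_eq_zero_iff (s := univ), prod_prod_sub_eq_zero_iff hf]
  constructor
  · rintro ⟨k, -, x, hx⟩
    exact ⟨x, by simp_all⟩
  · rintro ⟨x, hx⟩
    obtain ⟨k, hk⟩ := hX x
    exact ⟨k, mem_univ k, x, by simp_all⟩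

theorem skew_bollobas_partition_uniform_general (n m r : ℕ)
    (X : Fin r → Finset (Fin n))
    (hXcover : (Finset.univ : Finset (Fin n)) = Finset.univ.biUnion X)
    (A B : Fin m → Finset (Fin n))
    (hdisj : ∀ i, Disjoint (A i) (B i))
    (hcross : ∀ i j, i < j → (A i ∩ B j).Nonempty)
    (a b : Fin r → ℕ)
    (hA : ∀ i k, (A i ∩ X k).card = a k)
    (hB : ∀ i k, (B i ∩ X k).card = b k) :
    m ≤ ∏ k, (a k + b k).choose (a k) := by
  choose L R hLR using fun k =>
    exists_sym_factorization_prod_prod_sub (fun v : Fin n => (v : ℝ)) (a k) (b k)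
  let U : Matrix (Fin m) (∀ k, Sym (Fin (b k + 1)) (a k)) ℝ :=
    .of fun i μ => ∏ k, L k (A i ∩ X k) (μ k)
  let V : Matrix (∀ k, Sym (Fin (b k + 1)) (a k)) (Fin m) ℝ :=
    .of fun μ j => ∏ k, R k (B j ∩ X k) (μ k)
  have hUV i j : (U * V) i j = ∏ k, ∏ u ∈ A i ∩ X k, ∏ v ∈ B j ∩ X k, ((u : ℝ) - v) := by
    simp_rw [fun k => hLR k _ _ (hA i k) (hB j k), Fintype.prod_sum]
    simp only [U, V, Matrix.mul_apply, Matrix.of_apply, prod_mul_distrib]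
  have hX x : ∃ k, x ∈ X k := by simpa using (hXcover ▸ mem_univ x : x ∈ univ.biUnion X)
  have hinj : Function.Injective fun v : Fin n => (v : ℝ) :=
    Nat.cast_injective.comp Fin.val_injective
  have hcard := Matrix.card_le_card_of_mul_isLowerTriangular U V
    (fun i j hij => by rw [hUV, prod_prod_prod_sub_inter_eq_zero_iff hinj hX]; exact hcross i j hij)
    (fun i => by
      rw [hUV, ne_eq, prod_prod_prod_sub_inter_eq_zero_iff hinj hX, not_nonempty_iff_eq_empty]
      exact disjoint_iff_inter_eq_empty.1 (hdisj i))
  simpa [Fintype.card_pi, Sym.card_sym_eq_choose, add_comm] using hcard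

theorem skew_bollobas_partition_uniform (n m r : ℕ)
    (X : Fin r → Finset (Fin n))
    (hXdisj : ∀ k l, k ≠ l → Disjoint (X k) (X l))
    (hXcover : (Finset.univ : Finset (Fin n)) = Finset.univ.biUnion X)
    (A B : Fin m → Finset (Fin n))
    (hdisj : ∀ i, Disjoint (A i) (B i))
    (hcross : ∀ i j, i < j → (A i ∩ B j).Nonempty)
    (a b : Fin r → ℕ)
    (hA : ∀ i k, (A i ∩ X k).card = a k)
    (hB : ∀ i k, (B i ∩ X k).card = b k) :
    m ≤ ∏ k, (a k + b k).choose (a k) :=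
  skew_bollobas_partition_uniform_general n m r X hXcover A B hdisj hcross a b hA hB
end

section
/- If P = {(A_i, B_i) : i in [m]} is a skew Bollobás system of subsets of [n] with |A_i| = a_i and |B_i| = b_i, then the sum over i of 1/binom(a_i + b_i, b_i) is at most n + 1. -/
open Finset

section Aux

variable {α : Type*} [LinearOrder α]

/-- Helper: coercion of `orderIsoOfFin` respects equality of finsets. -/
lemma orderIsoOfFin_coe_congr {S1 S2 : Finset α} (h : S1 = S2) {k : ℕ}
    (h1 : S1.card = k) (h2 : S2.card = k) (t : Fin k) :
    (↑(S1.orderIsoOfFin h1 t) : α) = ↑(S2.orderIsoOfFin h2 t) := by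
  subst h; rfl

lemma orderIsoOfFin_coe_inj {S : Finset α} {k : ℕ} (h : S.card = k) {u v : Fin k}
    (he : (↑(S.orderIsoOfFin h u) : α) = ↑(S.orderIsoOfFin h v)) : u = v :=
  (S.orderIsoOfFin h).injective (Subtype.ext he)

lemma orderIsoOfFin_symm_congr_inj {S1 S2 : Finset α} (hS : S1 = S2) {k : ℕ}
    (h1 : S1.card = k) (h2 : S2.card = k) {y1 y2 : α} (m1 : y1 ∈ S1) (m2 : y2 ∈ S2)
    (h : ((S1.orderIsoOfFin h1).symm ⟨y1, m1⟩ : Fin k)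
        = (S2.orderIsoOfFin h2).symm ⟨y2, m2⟩) : y1 = y2 := by
  subst hS
  have := congrArg (S1.orderIsoOfFin h1) h
  rw [OrderIso.apply_symm_apply, OrderIso.apply_symm_apply] at this
  exact congrArg Subtype.val this

/-- The "sorting" function: on `SA` it places elements at the bottom ranks of `S`,
on `SB` at the top ranks, elsewhere it is the identity. -/
def sbFun (a b : ℕ) (SA SB S : Finset α)
    (hSA : SA.card = a) (hSB : SB.card = b) (hS : S.card = a + b) (y : α) : α :=
  if h : y ∈ SA then
    (S.orderIsoOfFin hS ⟨(((SA.orderIsoOfFin hSA).symm ⟨y, h⟩ : Fin a) : ℕ),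
      Nat.lt_of_lt_of_le (Fin.is_lt _) (Nat.le_add_right a b)⟩ : α)
  else if h : y ∈ SB then
    (S.orderIsoOfFin hS ⟨a + (((SB.orderIsoOfFin hSB).symm ⟨y, h⟩ : Fin b) : ℕ),
      Nat.add_lt_add_left (Fin.is_lt _) a⟩ : α)
  else y

variable {a b : ℕ} {SA SB S : Finset α} {hSA : SA.card = a} {hSB : SB.card = b}
  {hS : S.card = a + b}

lemma sbFun_apply_left {y : α} (h : y ∈ SA) :
    sbFun a b SA SB S hSA hSB hS y =
      ↑(S.orderIsoOfFin hS ⟨(((SA.orderIsoOfFin hSA).symm ⟨y, h⟩ : Fin a) : ℕ),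
        Nat.lt_of_lt_of_le (Fin.is_lt _) (Nat.le_add_right a b)⟩) :=
  dif_pos h

lemma sbFun_apply_right {y : α} (h1 : y ∉ SA) (h2 : y ∈ SB) :
    sbFun a b SA SB S hSA hSB hS y =
      ↑(S.orderIsoOfFin hS ⟨a + (((SB.orderIsoOfFin hSB).symm ⟨y, h2⟩ : Fin b) : ℕ),
        Nat.add_lt_add_left (Fin.is_lt _) a⟩) := by
  rw [sbFun, dif_neg h1, dif_pos h2]

lemma sbFun_apply_out {y : α} (h1 : y ∉ SA) (h2 : y ∉ SB) :
    sbFun a b SA SB S hSA hSB hS y = y := by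
  rw [sbFun, dif_neg h1, dif_neg h2]

lemma sbFun_mem {y : α} (h : y ∈ SA ∨ y ∈ SB) :
    sbFun a b SA SB S hSA hSB hS y ∈ S := by
  rw [sbFun]
  split_ifs with h1 h2
  · exact (S.orderIsoOfFin hS _).2
  · exact (S.orderIsoOfFin hS _).2
  · tauto

lemma sbFun_lt (hd : Disjoint SA SB) {y z : α} (hy : y ∈ SA) (hz : z ∈ SB) :
    sbFun a b SA SB S hSA hSB hS y < sbFun a b SA SB S hSA hSB hS z := by
  rw [sbFun_apply_left hy, sbFun_apply_right (disjoint_right.mp hd hz) hz]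
  have : (⟨(((SA.orderIsoOfFin hSA).symm ⟨y, hy⟩ : Fin a) : ℕ),
      Nat.lt_of_lt_of_le (Fin.is_lt _) (Nat.le_add_right a b)⟩ : Fin (a + b)) <
      ⟨a + (((SB.orderIsoOfFin hSB).symm ⟨z, hz⟩ : Fin b) : ℕ),
      Nat.add_lt_add_left (Fin.is_lt _) a⟩ :=
    Fin.mk_lt_mk.mpr (Nat.lt_of_lt_of_le (Fin.is_lt _) (Nat.le_add_right a _))
  exact Subtype.coe_lt_coe.mpr ((S.orderIsoOfFin hS).lt_iff_lt.mpr this)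

lemma sbFun_injective (hd : Disjoint SA SB) (hU : ∀ w, w ∈ S → w ∈ SA ∨ w ∈ SB) :
    Function.Injective (sbFun a b SA SB S hSA hSB hS) := by
  intro y z h
  have hmemS : ∀ w : α, w ∉ SA → w ∉ SB → w ∉ S := by
    intro w w1 w2 hw
    rcases hU w hw with h' | h' <;> tauto
  by_cases hy1 : y ∈ SA
  · by_cases hz1 : z ∈ SA
    · rw [sbFun_apply_left hy1, sbFun_apply_left hz1] at h
      have h2 := orderIsoOfFin_coe_inj hS h
      rw [Fin.mk.injEq] at h2
      have h4 : ((SA.orderIsoOfFin hSA).symm ⟨y, hy1⟩)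
          = ((SA.orderIsoOfFin hSA).symm ⟨z, hz1⟩) := Fin.ext h2
      have h5 := congrArg (SA.orderIsoOfFin hSA) h4
      rw [OrderIso.apply_symm_apply, OrderIso.apply_symm_apply] at h5
      exact congrArg Subtype.val h5
    · by_cases hz2 : z ∈ SB
      · rw [sbFun_apply_left hy1, sbFun_apply_right hz1 hz2] at h
        have h2 := orderIsoOfFin_coe_inj hS h
        rw [Fin.mk.injEq] at h2
        have := Fin.is_lt ((SA.orderIsoOfFin hSA).symm ⟨y, hy1⟩)
        omega
      · rw [sbFun_apply_left hy1, sbFun_apply_out hz1 hz2] at h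
        exact absurd (h ▸ (S.orderIsoOfFin hS _).2) (hmemS z hz1 hz2)
  · by_cases hy2 : y ∈ SB
    · by_cases hz1 : z ∈ SA
      · rw [sbFun_apply_right hy1 hy2, sbFun_apply_left hz1] at h
        have h2 := orderIsoOfFin_coe_inj hS h
        rw [Fin.mk.injEq] at h2
        have := Fin.is_lt ((SA.orderIsoOfFin hSA).symm ⟨z, hz1⟩)
        omega
      · by_cases hz2 : z ∈ SB
        · rw [sbFun_apply_right hy1 hy2, sbFun_apply_right hz1 hz2] at h
          have h2 := orderIsoOfFin_coe_inj hS h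
          rw [Fin.mk.injEq] at h2
          have h4 : ((SB.orderIsoOfFin hSB).symm ⟨y, hy2⟩)
              = ((SB.orderIsoOfFin hSB).symm ⟨z, hz2⟩) := Fin.ext (by omega)
          have h5 := congrArg (SB.orderIsoOfFin hSB) h4
          rw [OrderIso.apply_symm_apply, OrderIso.apply_symm_apply] at h5
          exact congrArg Subtype.val h5
        · rw [sbFun_apply_right hy1 hy2, sbFun_apply_out hz1 hz2] at h
          exact absurd (h ▸ (S.orderIsoOfFin hS _).2) (hmemS z hz1 hz2)
    · by_cases hz1 : z ∈ SA
      · rw [sbFun_apply_out hy1 hy2, sbFun_apply_left hz1] at h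
        exact absurd (h ▸ (S.orderIsoOfFin hS _).2) (hmemS y hy1 hy2)
      · by_cases hz2 : z ∈ SB
        · rw [sbFun_apply_out hy1 hy2, sbFun_apply_right hz1 hz2] at h
          exact absurd (h ▸ (S.orderIsoOfFin hS _).2) (hmemS y hy1 hy2)
        · rwa [sbFun_apply_out hy1 hy2, sbFun_apply_out hz1 hz2] at h

end Aux

/-- Counting lemma: the number of permutations placing all of `A` strictly below all
of `B`, multiplied by `C(a+b, b)`, is at least `n!`. -/
lemma sb_count {n : ℕ} (A B : Finset (Fin n)) (hd : Disjoint A B) :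
    Nat.factorial n ≤
      (Finset.univ.filter
        (fun σ : Equiv.Perm (Fin n) => ∀ x ∈ A, ∀ y ∈ B, σ x < σ y)).card *
        (A.card + B.card).choose B.card := by
  have hSA : ∀ σ : Equiv.Perm (Fin n), (A.image ⇑σ).card = A.card :=
    fun σ => Finset.card_image_of_injective _ σ.injective
  have hSB : ∀ σ : Equiv.Perm (Fin n), (B.image ⇑σ).card = B.card :=
    fun σ => Finset.card_image_of_injective _ σ.injective
  have hS : ∀ σ : Equiv.Perm (Fin n), ((A ∪ B).image ⇑σ).card = A.card + B.card := by
    intro σ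
    rw [Finset.card_image_of_injective _ σ.injective, Finset.card_union_of_disjoint hd]
  set f : Equiv.Perm (Fin n) → Fin n → Fin n := fun σ x =>
    sbFun A.card B.card (A.image ⇑σ) (B.image ⇑σ) ((A ∪ B).image ⇑σ)
      (hSA σ) (hSB σ) (hS σ) (σ x) with hf
  have hdimg : ∀ σ : Equiv.Perm (Fin n), Disjoint (A.image ⇑σ) (B.image ⇑σ) :=
    fun σ => (Finset.disjoint_image σ.injective).mpr hd
  have hUimg : ∀ σ : Equiv.Perm (Fin n),
      A.image ⇑σ ∪ B.image ⇑σ = (A ∪ B).image ⇑σ :=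
    fun σ => (Finset.image_union _ _).symm
  have hUor : ∀ σ : Equiv.Perm (Fin n), ∀ w, w ∈ (A ∪ B).image ⇑σ →
      w ∈ A.image ⇑σ ∨ w ∈ B.image ⇑σ := by
    intro σ w hw
    rw [← hUimg σ, Finset.mem_union] at hw
    exact hw
  have hfinj : ∀ σ, Function.Injective (f σ) :=
    fun σ => (sbFun_injective (hdimg σ) (hUor σ)).comp σ.injective
  have hfbij : ∀ σ, Function.Bijective (f σ) :=
    fun σ => Finite.injective_iff_bijective.mp (hfinj σ)
  set τ : Equiv.Perm (Fin n) → Equiv.Perm (Fin n) :=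
    fun σ => Equiv.ofBijective _ (hfbij σ) with hτ
  have hτapp : ∀ σ x, τ σ x = f σ x := fun σ x => rfl
  set T : Equiv.Perm (Fin n) → Finset (Fin (A.card + B.card)) := fun σ =>
    Finset.univ.filter
      (fun t => (((A ∪ B).image ⇑σ).orderIsoOfFin (hS σ) t : Fin n) ∈ B.image ⇑σ)
    with hT
  have hTimg : ∀ σ, (T σ).image
      (fun t => (((A ∪ B).image ⇑σ).orderIsoOfFin (hS σ) t : Fin n)) = B.image ⇑σ := by
    intro σ
    ext y
    constructor
    · intro hy
      obtain ⟨t, ht, rfl⟩ := Finset.mem_image.mp hy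
      exact (Finset.mem_filter.mp ht).2
    · intro hy
      have hyS : y ∈ (A ∪ B).image ⇑σ := (hUimg σ) ▸ Finset.mem_union_right _ hy
      apply Finset.mem_image.mpr
      refine ⟨(((A ∪ B).image ⇑σ).orderIsoOfFin (hS σ)).symm ⟨y, hyS⟩, ?_, ?_⟩
      · apply Finset.mem_filter.mpr
        refine ⟨Finset.mem_univ _, ?_⟩
        rw [OrderIso.apply_symm_apply]
        exact hy
      · rw [OrderIso.apply_symm_apply]
  have hisoinj : ∀ σ : Equiv.Perm (Fin n), Function.Injective
      (fun t => (((A ∪ B).image ⇑σ).orderIsoOfFin (hS σ) t : Fin n)) :=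
    fun σ u v huv => orderIsoOfFin_coe_inj (hS σ) huv
  have hTcard : ∀ σ, (T σ).card = B.card := by
    intro σ
    have h := Finset.card_image_of_injective (T σ) (hisoinj σ)
    rw [hTimg σ, hSB σ] at h
    exact h.symm
  -- the injection
  have key := Finset.card_le_card_of_injOn
    (f := fun σ : Equiv.Perm (Fin n) => (τ σ, T σ))
    (s := (Finset.univ : Finset (Equiv.Perm (Fin n))))
    (t := (Finset.univ.filter
        (fun σ : Equiv.Perm (Fin n) => ∀ x ∈ A, ∀ y ∈ B, σ x < σ y)) ×ˢ
        Finset.powersetCard B.card (Finset.univ : Finset (Fin (A.card + B.card))))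
    (by
      intro σ _
      rw [Finset.mem_coe, Finset.mem_product]
      constructor
      · rw [Finset.mem_filter]
        refine ⟨Finset.mem_univ _, ?_⟩
        intro x hx y hy
        rw [hτapp, hτapp]
        exact sbFun_lt (hdimg σ) (Finset.mem_image_of_mem _ hx)
          (Finset.mem_image_of_mem _ hy)
      · rw [Finset.mem_powersetCard]
        exact ⟨Finset.subset_univ _, hTcard σ⟩)
    (by
      intro σ1 _ σ2 _ heq
      simp only [Prod.mk.injEq] at heq
      obtain ⟨hτeq, hTeq⟩ := heq
      have hfeq : ∀ x, f σ1 x = f σ2 x := by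
        intro x
        rw [← hτapp, ← hτapp, hτeq]
      -- the image sets agree
      have himg : ∀ σ : Equiv.Perm (Fin n),
          (A ∪ B).image (f σ) = (A ∪ B).image ⇑σ := by
        intro σ
        apply Finset.eq_of_subset_of_card_le
        · intro y hy
          obtain ⟨x, hx, rfl⟩ := Finset.mem_image.mp hy
          apply sbFun_mem
          rcases Finset.mem_union.mp hx with h | h
          · exact Or.inl (Finset.mem_image_of_mem _ h)
          · exact Or.inr (Finset.mem_image_of_mem _ h)
        · rw [Finset.card_image_of_injective _ σ.injective,
            Finset.card_image_of_injective _ (hfinj σ)]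
      have hSeq : (A ∪ B).image ⇑σ1 = (A ∪ B).image ⇑σ2 := by
        rw [← himg σ1, ← himg σ2]
        exact Finset.image_congr (fun x _ => hfeq x)
      have hSBeq : B.image ⇑σ1 = B.image ⇑σ2 := by
        rw [← hTimg σ1, ← hTimg σ2, hTeq]
        exact Finset.image_congr
          (fun t _ => orderIsoOfFin_coe_congr hSeq (hS σ1) (hS σ2) t)
      have hSAeq : A.image ⇑σ1 = A.image ⇑σ2 := by
        have haux : ∀ σ : Equiv.Perm (Fin n),
            A.image ⇑σ = ((A ∪ B).image ⇑σ) \ (B.image ⇑σ) := by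
          intro σ
          rw [← hUimg σ, Finset.union_sdiff_cancel_right (hdimg σ)]
        rw [haux σ1, haux σ2, hSeq, hSBeq]
      -- pointwise equality
      apply Equiv.ext
      intro x
      by_cases hx : x ∈ A
      · have m1 : σ1 x ∈ A.image ⇑σ1 := Finset.mem_image_of_mem _ hx
        have m2 : σ2 x ∈ A.image ⇑σ2 := Finset.mem_image_of_mem _ hx
        have e := hfeq x
        rw [hf] at e
        simp only at e
        rw [sbFun_apply_left m1, sbFun_apply_left m2,
          ← orderIsoOfFin_coe_congr hSeq (hS σ1) (hS σ2)] at e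
        have e2 := orderIsoOfFin_coe_inj (hS σ1) e
        rw [Fin.mk.injEq] at e2
        exact orderIsoOfFin_symm_congr_inj hSAeq (hSA σ1) (hSA σ2) m1 m2 (Fin.ext e2)
      · by_cases hx2 : x ∈ B
        · have m1 : σ1 x ∈ B.image ⇑σ1 := Finset.mem_image_of_mem _ hx2
          have m2 : σ2 x ∈ B.image ⇑σ2 := Finset.mem_image_of_mem _ hx2
          have n1 : σ1 x ∉ A.image ⇑σ1 := Finset.disjoint_right.mp (hdimg σ1) m1
          have n2 : σ2 x ∉ A.image ⇑σ2 := Finset.disjoint_right.mp (hdimg σ2) m2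
          have e := hfeq x
          rw [hf] at e
          simp only at e
          rw [sbFun_apply_right n1 m1, sbFun_apply_right n2 m2,
            ← orderIsoOfFin_coe_congr hSeq (hS σ1) (hS σ2)] at e
          have e2 := orderIsoOfFin_coe_inj (hS σ1) e
          rw [Fin.mk.injEq] at e2
          exact orderIsoOfFin_symm_congr_inj hSBeq (hSB σ1) (hSB σ2) m1 m2
            (Fin.ext (by omega))
        · have hnot : ∀ σ : Equiv.Perm (Fin n), f σ x = σ x := by
            intro σ
            have hA : σ x ∉ A.image ⇑σ := by
              intro hmem
              obtain ⟨u, hu, huv⟩ := Finset.mem_image.mp hmem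
              exact hx (σ.injective huv ▸ hu)
            have hB : σ x ∉ B.image ⇑σ := by
              intro hmem
              obtain ⟨u, hu, huv⟩ := Finset.mem_image.mp hmem
              exact hx2 (σ.injective huv ▸ hu)
            rw [hf]
            exact sbFun_apply_out hA hB
          rw [← hnot σ1, ← hnot σ2]
          exact hfeq x
      )
  calc Nat.factorial n = (Finset.univ : Finset (Equiv.Perm (Fin n))).card := by
        rw [Finset.card_univ, Fintype.card_perm, Fintype.card_fin]
    _ ≤ _ := key
    _ = _ := by
        rw [Finset.card_product, Finset.card_powersetCard, Finset.card_univ,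
          Fintype.card_fin]

/-- For a fixed permutation, at most `n + 1` pairs are "good". -/
lemma sb_good_le {n m : ℕ} (A B : Fin m → Finset (Fin n))
    (hcross : ∀ i j, i < j → (A i ∩ B j).Nonempty) (σ : Equiv.Perm (Fin n)) :
    (Finset.univ.filter (fun i => ∀ x ∈ A i, ∀ y ∈ B i, σ x < σ y)).card ≤ n + 1 := by
  classical
  have key : ∀ p q : Fin m,
      (∀ x ∈ A p, ∀ y ∈ B p, σ x < σ y) → (∀ x ∈ A q, ∀ y ∈ B q, σ x < σ y) →
      p < q → (A q).sup (fun x => (σ x : ℕ) + 1) < (A p).sup (fun x => (σ x : ℕ) + 1) := by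
    intro p q _ hq hpq
    obtain ⟨x, hx⟩ := hcross p q hpq
    rw [Finset.mem_inter] at hx
    have h1 : (σ x : ℕ) + 1 ≤ (A p).sup (fun x => (σ x : ℕ) + 1) :=
      Finset.le_sup (f := fun x => (σ x : ℕ) + 1) hx.1
    have h2 : (A q).sup (fun x => (σ x : ℕ) + 1) ≤ (σ x : ℕ) := by
      apply Finset.sup_le
      intro z hz
      exact Nat.succ_le_of_lt (hq z hz x hx.2)
    omega
  have := Finset.card_le_card_of_injOn (fun i => (A i).sup (fun x => (σ x : ℕ) + 1))
    (s := Finset.univ.filter (fun i => ∀ x ∈ A i, ∀ y ∈ B i, σ x < σ y))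
    (t := Finset.range (n + 1))
    (by
      intro i _
      rw [Finset.mem_coe, Finset.mem_range]
      exact Nat.lt_succ_of_le (Finset.sup_le fun x _ => (σ x).isLt))
    (by
      intro i hi j hj hij
      rw [Finset.mem_coe, Finset.mem_filter] at hi hj
      by_contra hne
      rcases lt_trichotomy i j with h | h | h
      · exact absurd hij (Nat.ne_of_gt (key i j hi.2 hj.2 h))
      · exact hne h
      · exact absurd hij.symm (Nat.ne_of_gt (key j i hj.2 hi.2 h)))
  simpa using this

theorem skew_bollobas_hegedus_frankl (n m : ℕ)
    (A B : Fin m → Finset (Fin n))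
    (hdisj : ∀ i, Disjoint (A i) (B i))
    (hcross : ∀ i j, i < j → (A i ∩ B j).Nonempty) :
    ∑ i, (1 : ℝ) / ((A i).card + (B i).card).choose ((B i).card) ≤ n + 1 := by
  have h1 : ∀ i, Nat.factorial n ≤
      (Finset.univ.filter
        (fun σ : Equiv.Perm (Fin n) => ∀ x ∈ A i, ∀ y ∈ B i, σ x < σ y)).card *
        ((A i).card + (B i).card).choose ((B i).card) :=
    fun i => sb_count (A i) (B i) (hdisj i)
  have G : Fin m → ℕ := fun i =>
    (Finset.univ.filter
      (fun σ : Equiv.Perm (Fin n) => ∀ x ∈ A i, ∀ y ∈ B i, σ x < σ y)).card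
  have h2 : ∑ i, (Finset.univ.filter
      (fun σ : Equiv.Perm (Fin n) => ∀ x ∈ A i, ∀ y ∈ B i, σ x < σ y)).card
      ≤ (n + 1) * Nat.factorial n := by
    have hswap : ∑ i, (Finset.univ.filter
        (fun σ : Equiv.Perm (Fin n) => ∀ x ∈ A i, ∀ y ∈ B i, σ x < σ y)).card
        = ∑ σ : Equiv.Perm (Fin n),
        (Finset.univ.filter (fun i => ∀ x ∈ A i, ∀ y ∈ B i, σ x < σ y)).card := by
      calc ∑ i, (Finset.univ.filter
            (fun σ : Equiv.Perm (Fin n) => ∀ x ∈ A i, ∀ y ∈ B i, σ x < σ y)).card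
          = ∑ i, ∑ σ : Equiv.Perm (Fin n),
              if (∀ x ∈ A i, ∀ y ∈ B i, σ x < σ y) then 1 else 0 :=
            Finset.sum_congr rfl fun i _ => Finset.card_filter _ _
        _ = ∑ σ : Equiv.Perm (Fin n), ∑ i,
              if (∀ x ∈ A i, ∀ y ∈ B i, σ x < σ y) then 1 else 0 := Finset.sum_comm
        _ = _ := Finset.sum_congr rfl fun σ _ => (Finset.card_filter _ _).symm
    rw [hswap]
    calc ∑ σ : Equiv.Perm (Fin n),
          (Finset.univ.filter (fun i => ∀ x ∈ A i, ∀ y ∈ B i, σ x < σ y)).card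
        ≤ ∑ _σ : Equiv.Perm (Fin n), (n + 1) :=
          Finset.sum_le_sum (fun σ _ => sb_good_le A B hcross σ)
      _ = (n + 1) * Nat.factorial n := by
          rw [Finset.sum_const, Finset.card_univ, Fintype.card_perm, Fintype.card_fin,
            smul_eq_mul, mul_comm]
  have hfacpos : (0 : ℝ) < Nat.factorial n := by
    exact_mod_cast Nat.factorial_pos n
  have hkey : ∀ i : Fin m, (1 : ℝ) / ((A i).card + (B i).card).choose ((B i).card)
      ≤ ((Finset.univ.filter
        (fun σ : Equiv.Perm (Fin n) => ∀ x ∈ A i, ∀ y ∈ B i, σ x < σ y)).card : ℝ) /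
        Nat.factorial n := by
    intro i
    have hcpos : (0 : ℝ) < ((A i).card + (B i).card).choose ((B i).card) := by
      exact_mod_cast Nat.choose_pos (Nat.le_add_left _ _)
    rw [div_le_div_iff₀ hcpos hfacpos, one_mul]
    exact_mod_cast h1 i
  calc ∑ i, (1 : ℝ) / ((A i).card + (B i).card).choose ((B i).card)
      ≤ ∑ i, ((Finset.univ.filter
          (fun σ : Equiv.Perm (Fin n) => ∀ x ∈ A i, ∀ y ∈ B i, σ x < σ y)).card : ℝ) /
          Nat.factorial n := Finset.sum_le_sum (fun i _ => hkey i)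
    _ = (∑ i, ((Finset.univ.filter
          (fun σ : Equiv.Perm (Fin n) => ∀ x ∈ A i, ∀ y ∈ B i, σ x < σ y)).card : ℝ)) /
          Nat.factorial n := by rw [Finset.sum_div]
    _ ≤ ((n + 1) * Nat.factorial n : ℝ) / Nat.factorial n := by
        gcongr
        exact_mod_cast h2
    _ = n + 1 := by field_simp
end

section
/- If P = {(A_i, B_i) : i in [m]} is a skew Bollobás system of subsets of [n] with |A_i| = a_i and |B_i| = b_i, then the sum over i of 1/((1 + a_i + b_i)·binom(a_i + b_i, a_i)) is at most 1. -/
open intervalIntegral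

lemma beta_nat (a b : ℕ) :
    ∫ x in (0:ℝ)..1, x ^ a * (1 - x) ^ b
      = (a.factorial * b.factorial : ℝ) / (a + b + 1).factorial := by
  induction b generalizing a with
  | zero =>
      simp only [pow_zero, mul_one, integral_pow]
      have h3 : (a+0+1).factorial = (a+1)*a.factorial := by simp [Nat.factorial_succ]
      rw [h3]
      push_cast
      rw [div_eq_div_iff (by positivity) (by positivity)]
      simp [Nat.factorial_zero]
      ring
  | succ b ih =>
      have key : ∫ x in (0:ℝ)..1,
          (((a:ℝ)+1) * (x ^ a * (1 - x) ^ (b+1)) - ((b:ℝ)+1) * (x ^ (a+1) * (1 - x) ^ b)) = 0 := by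
        have hd : ∀ x ∈ Set.uIcc (0:ℝ) 1, HasDerivAt (fun x : ℝ => x ^ (a+1) * (1 - x) ^ (b+1))
            (((a:ℝ)+1) * (x ^ a * (1 - x) ^ (b+1)) - ((b:ℝ)+1) * (x ^ (a+1) * (1 - x) ^ b)) x := by
          intro x _
          have h1 : HasDerivAt (fun x : ℝ => x ^ (a+1)) (((a:ℝ)+1) * x ^ a) x := by
            simpa using (hasDerivAt_pow (a+1) x)
          have h2 : HasDerivAt (fun x : ℝ => (1 - x) ^ (b+1))
              (-(((b:ℝ)+1) * (1 - x) ^ b)) x := by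
            have := ((hasDerivAt_pow (b+1) (1 - x)).comp x
              ((hasDerivAt_id x).const_sub 1))
            simpa [Function.comp_def] using this
          have := h1.fun_mul h2
          exact this.congr_deriv (by push_cast; ring)
        have hcont : IntervalIntegrable (fun x : ℝ =>
            ((a:ℝ)+1) * (x ^ a * (1 - x) ^ (b+1)) - ((b:ℝ)+1) * (x ^ (a+1) * (1 - x) ^ b))
            MeasureTheory.volume 0 1 := by
          apply Continuous.intervalIntegrable
          continuity
        have := integral_eq_sub_of_hasDerivAt hd hcont
        simp at this
        simpa using this
      have hi1 : IntervalIntegrable (fun x : ℝ => x ^ a * (1 - x) ^ (b+1))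
          MeasureTheory.volume 0 1 := by apply Continuous.intervalIntegrable; continuity
      have hi2 : IntervalIntegrable (fun x : ℝ => x ^ (a+1) * (1 - x) ^ b)
          MeasureTheory.volume 0 1 := by apply Continuous.intervalIntegrable; continuity
      rw [integral_sub ((hi1.const_mul _)) ((hi2.const_mul _)),
        integral_const_mul, integral_const_mul, sub_eq_zero] at key
      have h2 := ih (a+1)
      have ha : ((a:ℝ)+1) ≠ 0 := by positivity
      rw [h2] at key
      have h3 : (a + (b+1) + 1) = (a + 1 + b + 1) := by omega
      rw [h3]
      have hfa : (((a+1).factorial : ℕ) : ℝ) = ((a:ℝ)+1) * a.factorial := by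
        rw [Nat.factorial_succ]; push_cast; ring
      have hfb : (((b+1).factorial : ℕ) : ℝ) = ((b:ℝ)+1) * b.factorial := by
        rw [Nat.factorial_succ]; push_cast; ring
      have hF : (0:ℝ) < ((a+1+b+1).factorial : ℝ) := by positivity
      apply mul_left_cancel₀ ha
      rw [key, hfa, hfb]
      field_simp

open intervalIntegral Finset

lemma pointwise_bound {n m : ℕ} (A B : Fin m → Finset (Fin n))
    (hdisj : ∀ i, Disjoint (A i) (B i))
    (hcross : ∀ i j, i < j → (A i ∩ B j).Nonempty)
    {x : ℝ} (hx0 : 0 ≤ x) (hx1 : x ≤ 1) :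
    ∑ i, x ^ (A i).card * (1 - x) ^ (B i).card ≤ 1 := by
  classical
  have hx1' : 0 ≤ 1 - x := by linarith
  set w : Finset (Fin n) → ℝ := fun S => x ^ S.card * (1 - x) ^ (n - S.card) with hw
  have hw0 : ∀ S, 0 ≤ w S := fun S => mul_nonneg (pow_nonneg hx0 _) (pow_nonneg hx1' _)
  set E : Fin m → Finset (Finset (Fin n)) :=
    fun i => univ.filter (fun S => A i ⊆ S ∧ Disjoint S (B i)) with hE
  -- total weight is 1
  have htot : ∑ S : Finset (Fin n), w S = 1 := by
    have h := Finset.prod_add (fun _ : Fin n => x) (fun _ : Fin n => 1 - x) univ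
    simp only [add_sub_cancel, prod_const, one_pow, prod_const] at h
    rw [Finset.powerset_univ] at h
    have hc : ∀ S : Finset (Fin n), (univ \ S).card = n - S.card := by
      intro S
      rw [Finset.card_sdiff_of_subset (subset_univ S), Finset.card_univ, Fintype.card_fin]
    calc ∑ S : Finset (Fin n), w S
        = ∑ S : Finset (Fin n), x ^ S.card * (1 - x) ^ (univ \ S).card := by
          apply Finset.sum_congr rfl
          intro S _
          rw [hw, hc S]
      _ = 1 := h.symm
  -- each term equals the weight of its event
  have hterm : ∀ i, x ^ (A i).card * (1 - x) ^ (B i).card = ∑ S ∈ E i, w S := by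
    intro i
    set R := (A i ∪ B i)ᶜ with hR
    have hcardAB : (A i ∪ B i).card = (A i).card + (B i).card :=
      Finset.card_union_of_disjoint (hdisj i)
    have hcardR : R.card = n - ((A i).card + (B i).card) := by
      rw [hR, Finset.card_compl, Fintype.card_fin, hcardAB]
    have habn : (A i).card + (B i).card ≤ n := by
      rw [← hcardAB]; simpa using Finset.card_le_univ (A i ∪ B i)
    have hstep : ∑ S ∈ E i, w S
        = ∑ T ∈ R.powerset, x ^ ((A i).card + T.card) * (1 - x) ^ ((B i).card + (R.card - T.card)) := by
      apply Finset.sum_nbij' (fun S => S \ A i) (fun T => A i ∪ T)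
      · intro S hS
        simp only [hE, Finset.mem_filter] at hS
        rw [Finset.mem_powerset]
        intro y hy
        simp only [Finset.mem_sdiff] at hy
        simp only [hR, Finset.mem_compl, Finset.mem_union]
        push_neg
        exact ⟨hy.2, fun hyB => (Finset.disjoint_left.mp hS.2.2) hy.1 hyB⟩
      · intro T hT
        rw [Finset.mem_powerset] at hT
        simp only [hE, Finset.mem_filter, Finset.mem_univ, true_and]
        constructor
        · exact Finset.subset_union_left
        · rw [Finset.disjoint_left]
          intro y hy hyB
          rcases Finset.mem_union.mp hy with h1 | h1
          · exact (Finset.disjoint_left.mp (hdisj i)) h1 hyB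
          · have := hT h1
            simp only [hR, Finset.mem_compl, Finset.mem_union] at this
            exact this (Or.inr hyB)
      · intro S hS
        simp only [hE, Finset.mem_filter] at hS
        exact Finset.union_sdiff_of_subset hS.2.1
      · intro T hT
        rw [Finset.mem_powerset] at hT
        apply Finset.union_sdiff_cancel_left
        rw [Finset.disjoint_left]
        intro y hyA hyT
        have := hT hyT
        simp only [hR, Finset.mem_compl, Finset.mem_union] at this
        exact this (Or.inl hyA)
      · intro S hS
        simp only [hE, Finset.mem_filter] at hS
        have hsub : A i ⊆ S := hS.2.1
        have hAS := Finset.card_le_card hsub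
        have hcardS : S.card = (A i).card + (S \ A i).card := by
          rw [Finset.card_sdiff_of_subset hsub]; omega
        have hSR : S \ A i ⊆ R := by
          intro y hy
          simp only [Finset.mem_sdiff] at hy
          simp only [hR, Finset.mem_compl, Finset.mem_union]
          push_neg
          exact ⟨hy.2, fun hyB => (Finset.disjoint_left.mp hS.2.2) hy.1 hyB⟩
        have ht : (S \ A i).card ≤ R.card := Finset.card_le_card hSR
        have hSn : S.card ≤ n := by simpa using Finset.card_le_univ S
        show x ^ S.card * (1 - x) ^ (n - S.card) = _
        have e2 : n - S.card = (B i).card + (R.card - (S \ A i).card) := by omega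
        rw [e2, hcardS]
    rw [hstep]
    have hfact : ∀ T ∈ R.powerset,
        x ^ ((A i).card + T.card) * (1 - x) ^ ((B i).card + (R.card - T.card))
        = (x ^ (A i).card * (1 - x) ^ (B i).card) * (x ^ T.card * (1 - x) ^ (R.card - T.card)) := by
      intro T _
      rw [pow_add, pow_add]; ring
    rw [Finset.sum_congr rfl hfact, ← Finset.mul_sum]
    have hone : ∑ T ∈ R.powerset, x ^ T.card * (1 - x) ^ (R.card - T.card) = 1 := by
      have h := Finset.prod_add (fun _ : Fin n => x) (fun _ : Fin n => 1 - x) R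
      simp only [add_sub_cancel, prod_const, one_pow] at h
      calc ∑ T ∈ R.powerset, x ^ T.card * (1 - x) ^ (R.card - T.card)
          = ∑ T ∈ R.powerset, x ^ T.card * (1 - x) ^ (R \ T).card := by
            apply Finset.sum_congr rfl
            intro T hT
            rw [Finset.mem_powerset] at hT
            rw [Finset.card_sdiff_of_subset hT]
        _ = 1 := h.symm
    rw [hone, mul_one]
  -- events are pairwise disjoint: each S lies in at most one E i
  have hcount : ∀ S : Finset (Fin n), (univ.filter (fun i => S ∈ E i)).card ≤ 1 := by
    intro S
    rw [Finset.card_le_one]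
    intro i hi j hj
    simp only [Finset.mem_filter, hE, Finset.mem_filter] at hi hj
    by_contra hne
    have key : ∀ p q : Fin m, p < q → A p ⊆ S → Disjoint S (B q) → False := by
      intro p q hpq hpS hqS
      obtain ⟨y, hy⟩ := hcross p q hpq
      rw [Finset.mem_inter] at hy
      exact (Finset.disjoint_left.mp hqS) (hpS hy.1) hy.2
    rcases lt_trichotomy i j with h | h | h
    · exact key i j h hi.2.2.1 hj.2.2.2
    · exact hne h
    · exact key j i h hj.2.2.1 hi.2.2.2
  calc ∑ i, x ^ (A i).card * (1 - x) ^ (B i).card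
      = ∑ i, ∑ S ∈ E i, w S := by exact Finset.sum_congr rfl (fun i _ => hterm i)
    _ = ∑ i : Fin m, ∑ S : Finset (Fin n), if S ∈ E i then w S else 0 := by
        apply Finset.sum_congr rfl
        intro i _
        rw [Finset.sum_ite_mem, Finset.univ_inter]
    _ = ∑ S : Finset (Fin n), ∑ i : Fin m, if S ∈ E i then w S else 0 := Finset.sum_comm
    _ ≤ ∑ S : Finset (Fin n), w S := by
        apply Finset.sum_le_sum
        intro S _
        rw [Finset.sum_ite, Finset.sum_const, Finset.sum_const, smul_zero, add_zero,
          nsmul_eq_mul]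
        calc ((univ.filter (fun i => S ∈ E i)).card : ℝ) * w S
            ≤ 1 * w S := by
              apply mul_le_mul_of_nonneg_right _ (hw0 S)
              exact_mod_cast hcount S
          _ = w S := one_mul _
    _ = 1 := htot

lemma coeff_eq (a b : ℕ) :
    (1 : ℝ) / ((1 + a + b) * ((a + b).choose a)) =
      (a.factorial * b.factorial : ℝ) / (a + b + 1).factorial := by
  have hnat : (1 + a + b) * ((a + b).choose a) * a.factorial * b.factorial
      = (a + b + 1).factorial := by
    have h := Nat.choose_mul_factorial_mul_factorial (Nat.le_add_right a b)
    rw [Nat.add_sub_cancel_left] at h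
    rw [Nat.factorial_succ, ← h]
    ring
  have hpos : 0 < (a + b).choose a := Nat.choose_pos (Nat.le_add_right a b)
  rw [div_eq_div_iff (by positivity) (by positivity)]
  rw [← hnat]
  push_cast
  ring

set_option maxHeartbeats 1000000 in
theorem skew_bollobas_yue (n m : ℕ)
    (A B : Fin m → Finset (Fin n))
    (hdisj : ∀ i, Disjoint (A i) (B i))
    (hcross : ∀ i j, i < j → (A i ∩ B j).Nonempty) :
    ∑ i, (1 : ℝ) /
      ((1 + (A i).card + (B i).card) * ((A i).card + (B i).card).choose ((A i).card)) ≤ 1 := by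
  have hrw : ∀ i : Fin m, (1 : ℝ) /
      ((1 + (A i).card + (B i).card) * ((A i).card + (B i).card).choose ((A i).card))
      = ∫ x in (0:ℝ)..1, x ^ (A i).card * (1 - x) ^ (B i).card := by
    intro i
    rw [beta_nat, coeff_eq]
  rw [Finset.sum_congr rfl (fun i _ => hrw i)]
  have hint : ∀ i : Fin m, IntervalIntegrable
      (fun x : ℝ => x ^ (A i).card * (1 - x) ^ (B i).card) MeasureTheory.volume 0 1 := by
    intro i; apply Continuous.intervalIntegrable; continuity
  rw [← intervalIntegral.integral_finset_sum (fun i _ => hint i)]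
  have hfint : IntervalIntegrable
      (fun x : ℝ => ∑ i : Fin m, x ^ (A i).card * (1 - x) ^ (B i).card)
      MeasureTheory.volume 0 1 := by
    apply Continuous.intervalIntegrable
    exact continuous_finset_sum _ (fun i _ => by continuity)
  have h2 : (∫ x in (0:ℝ)..1, ∑ i : Fin m, x ^ (A i).card * (1 - x) ^ (B i).card)
      ≤ ∫ _ in (0:ℝ)..1, (1:ℝ) :=
    intervalIntegral.integral_mono_on (by norm_num) hfint intervalIntegrable_const
      (fun x hx => pointwise_bound A B hdisj hcross hx.1 hx.2)
  simpa using h2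
end

section
/- Suppose [n] is the disjoint union of sets X_1, ..., X_r with |X_k| = n_k. If P = {(A_i, B_i) : i in [m]} is a skew Bollobás system of subsets of [n] with a_{i,k} = |A_i ∩ X_k| and b_{i,k} = |B_i ∩ X_k|, then the sum over i of ∏_{k=1}^r 1/binom(a_{i,k} + b_{i,k}, a_{i,k}) is at most ∏_{k=1}^r (1 + n_k). -/
open Finset

lemma hockey (a : ℕ) : ∀ c, ∑ j ∈ range (c+1), (a+j).choose a = (a+c+1).choose (a+1) := by
  intro c
  induction c with
  | zero => simp
  | succ c ih =>
    rw [sum_range_succ, ih]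
    have h1 : a+(c+1) = a+c+1 := by omega
    have h2 : a+(c+1)+1 = (a+c+1)+1 := by omega
    rw [h1, Nat.choose_succ_succ (a+c+1) a]
    simp only [Nat.succ_eq_add_one]
    omega

lemma choose_conv (a : ℕ) : ∀ b c, ∑ j ∈ range (c+1), (a+j).choose a * (b+(c-j)).choose b
    = (a+b+c+1).choose (a+b+1) := by
  intro b
  induction b with
  | zero => intro c; simpa using hockey a c
  | succ b ihb =>
    intro c
    induction c with
    | zero => simp
    | succ c ihc =>
      rw [sum_range_succ]
      have hsplit : ∀ j ∈ range (c+1), (a+j).choose a * (b+1+(c+1-j)).choose (b+1)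
          = (a+j).choose a * (b+1+(c-j)).choose (b+1) + (a+j).choose a * (b+(c+1-j)).choose b := by
        intro j hj
        have hj' : j ≤ c := by simpa [Nat.lt_succ_iff] using hj
        have h1 : b+1+(c+1-j) = (b+(c-j)+1) + 1 := by omega
        have h2 : b+1+(c-j) = b+(c-j)+1 := by omega
        have h3 : b+(c+1-j) = b+(c-j)+1 := by omega
        rw [h1, h2, h3, Nat.choose_succ_succ]
        ring
      rw [sum_congr rfl hsplit, sum_add_distrib, ihc]
      have e2 := ihb (c+1)
      rw [sum_range_succ] at e2
      simp only [Nat.sub_self, Nat.add_zero, Nat.choose_self, mul_one] at e2 ⊢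
      have h5 : a+(b+1)+(c+1)+1 = (a+b+c+2)+1 := by omega
      have h6 : a+(b+1)+1 = (a+b+1)+1 := by omega
      have h7 : a+(b+1)+c+1 = a+b+c+2 := by omega
      have h8 : a+b+(c+1)+1 = a+b+c+2 := by omega
      have h9 : a+(c+1) = a+c+1 := by omega
      rw [h8, h9] at e2
      rw [h5, h6, h7, h9, Nat.choose_succ_succ (a+b+c+2) (a+b+1)]
      simp only [Nat.succ_eq_add_one]
      omega

lemma key_id (a b j d : ℕ) :
    (j+d).choose j * ((a+b+(j+d)).choose (a+b) * (a+b).choose a)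
      = (a+j).choose a * ((b+d).choose b * ((a+b+(j+d)).choose (a+j))) := by
  have key : ((j+d).choose j * ((a+b+(j+d)).choose (a+b) * (a+b).choose a) : ℚ)
      = (a+j).choose a * ((b+d).choose b * ((a+b+(j+d)).choose (a+j))) := by
    have e1 : a+b+(j+d) - (a+b) = j+d := by omega
    have e2 : a+b+(j+d) - (a+j) = b+d := by omega
    have h1 : j ≤ j + d := by omega
    have h2 : a+b ≤ a+b+(j+d) := by omega
    have h3 : a ≤ a+b := by omega
    have h4 : a ≤ a+j := by omega
    have h5 : b ≤ b+d := by omega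
    have h6 : a+j ≤ a+b+(j+d) := by omega
    rw [Nat.cast_choose ℚ h1, Nat.cast_choose ℚ h2, Nat.cast_choose ℚ h3,
      Nat.cast_choose ℚ h4, Nat.cast_choose ℚ h5, Nat.cast_choose ℚ h6, e1, e2]
    simp only [Nat.add_sub_cancel_left, Nat.add_sub_cancel]
    field_simp
  exact_mod_cast key

lemma part_total {α : Type*} [DecidableEq α] (X : Finset α) :
    ∑ T ∈ X.powerset, (1:ℝ)/(((X.card:ℝ)+1) * (X.card.choose T.card)) = 1 := by
  rw [sum_powerset]
  have h : ∀ j ∈ range (X.card+1),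
      ∑ T ∈ powersetCard j X, (1:ℝ)/(((X.card:ℝ)+1) * (X.card.choose T.card))
        = 1/((X.card:ℝ)+1) := by
    intro j hj
    have hj' : j ≤ X.card := by simpa [Nat.lt_succ_iff] using hj
    rw [sum_congr rfl (fun T hT => by rw [(mem_powersetCard.1 hT).2]),
      sum_const, card_powersetCard, nsmul_eq_mul]
    have hpos : (0:ℝ) < (X.card.choose j : ℝ) := by exact_mod_cast Nat.choose_pos hj'
    field_simp
  rw [sum_congr rfl h, sum_const, card_range, nsmul_eq_mul]
  have : ((X.card:ℝ)+1) ≠ 0 := by positivity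
  field_simp
  push_cast
  ring

lemma part_sum_bound {α : Type*} [DecidableEq α] (X A B : Finset α)
    (hA : A ⊆ X) (hB : B ⊆ X) (hAB : Disjoint A B) :
    (1:ℝ)/(((X.card:ℝ)+1) * ((A.card + B.card).choose A.card))
      ≤ ∑ T ∈ X.powerset.filter (fun T => A ⊆ T ∧ Disjoint B T),
          (1:ℝ)/(((X.card:ℝ)+1) * (X.card.choose T.card)) := by
  classical
  set Y : Finset α := (X \ A) \ B with hY
  have hBXA : B ⊆ X \ A := fun x hx =>
    mem_sdiff.2 ⟨hB hx, fun hxA => (disjoint_left.1 hAB hxA hx).elim⟩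
  have hcs : X.card = A.card + B.card + Y.card := by
    have h1 : (X \ A).card = X.card - A.card := card_sdiff_of_subset hA
    have h2 : Y.card = (X\A).card - B.card := card_sdiff_of_subset hBXA
    have h3 : A.card ≤ X.card := card_le_card hA
    have h4 : B.card ≤ (X\A).card := card_le_card hBXA
    omega
  set a := A.card with ha
  set b := B.card with hb
  set c := Y.card with hc
  set s := X.card with hs
  -- reindex
  have hre : ∑ T ∈ X.powerset.filter (fun T => A ⊆ T ∧ Disjoint B T),
        (1:ℝ)/(((s:ℝ)+1) * (s.choose T.card))
      = ∑ T' ∈ Y.powerset, (1:ℝ)/(((s:ℝ)+1) * (s.choose (a + T'.card))) := by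
    refine sum_nbij' (fun T => T \ A) (fun T' => T' ∪ A) ?_ ?_ ?_ ?_ ?_
    · intro T hT
      simp only [mem_filter, mem_powerset] at hT
      obtain ⟨hTX, hAT, hBT⟩ := hT
      refine mem_powerset.2 (fun x hx => ?_)
      rw [mem_sdiff] at hx
      refine mem_sdiff.2 ⟨mem_sdiff.2 ⟨hTX hx.1, hx.2⟩, fun hxB => ?_⟩
      exact disjoint_left.1 hBT hxB hx.1
    · intro T' hT'
      rw [mem_powerset] at hT'
      have hT'XA : T' ⊆ X \ A := hT'.trans (sdiff_subset)
      refine mem_filter.2 ⟨mem_powerset.2 ?_, subset_union_right, ?_⟩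
      · exact union_subset (hT'XA.trans sdiff_subset) hA
      · refine disjoint_union_right.2 ⟨?_, hAB.symm⟩
        exact Finset.disjoint_left.2 fun x hxB hxT' =>
          (mem_sdiff.1 (hT' hxT')).2 hxB
    · intro T hT
      simp only [mem_filter, mem_powerset] at hT
      exact sdiff_union_of_subset hT.2.1
    · intro T' hT'
      rw [mem_powerset] at hT'
      have hdTA : Disjoint T' A := Finset.disjoint_left.2 fun x hxT' hxA =>
        (mem_sdiff.1 (mem_sdiff.1 (hT' hxT')).1).2 hxA
      show (T' ∪ A) \ A = T'
      rw [union_sdiff_right, sdiff_eq_self_of_disjoint hdTA]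
    · intro T hT
      simp only [mem_filter, mem_powerset] at hT
      have : T.card = a + (T \ A).card := by
        have h5 : (T \ A).card = T.card - a := card_sdiff_of_subset hT.2.1
        have h6 : a ≤ T.card := card_le_card hT.2.1
        omega
      rw [← this]
  rw [hre, sum_powerset]
  -- collapse by cardinality
  have hcoll : ∀ j ∈ range (c+1),
      ∑ T' ∈ powersetCard j Y, (1:ℝ)/(((s:ℝ)+1) * (s.choose (a + T'.card)))
        = (c.choose j : ℝ) * ((1:ℝ)/(((s:ℝ)+1) * (s.choose (a + j)))) := by
    intro j hj
    rw [sum_congr rfl (fun T hT => by rw [(mem_powersetCard.1 hT).2]),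
      sum_const, card_powersetCard, nsmul_eq_mul]
  rw [sum_congr rfl hcoll]
  -- per-term identity
  have hterm : ∀ j ∈ range (c+1),
      (c.choose j : ℝ) * ((1:ℝ)/(((s:ℝ)+1) * (s.choose (a + j))))
        = (((a+j).choose a * (b+(c-j)).choose b : ℕ) : ℝ)
            / (((s:ℝ)+1) * (s.choose (a+b)) * ((a+b).choose a)) := by
    intro j hj
    have hj' : j ≤ c := by simpa [Nat.lt_succ_iff] using hj
    have hnat := key_id a b j (c - j)
    have e : j + (c - j) = c := by omega
    rw [e] at hnat
    rw [show a + b + c = s from hcs.symm] at hnat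
    have hp1 : (0:ℝ) < ((s:ℝ)+1) := by positivity
    have hp2 : (0:ℝ) < (s.choose (a+j) : ℝ) := by
      exact_mod_cast Nat.choose_pos (by omega)
    have hp3 : (0:ℝ) < (s.choose (a+b) : ℝ) := by
      exact_mod_cast Nat.choose_pos (by omega)
    have hp4 : (0:ℝ) < ((a+b).choose a : ℝ) := by
      exact_mod_cast Nat.choose_pos (by omega)
    have hcast : (c.choose j : ℝ) * ((s.choose (a+b) : ℝ) * ((a+b).choose a : ℝ))
        = ((a+j).choose a : ℝ) * (((b+(c-j)).choose b : ℝ) * (s.choose (a+j) : ℝ)) := by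
      exact_mod_cast congrArg (Nat.cast (R := ℝ)) hnat
    rw [mul_one_div, div_eq_div_iff (ne_of_gt (mul_pos hp1 hp2)) (ne_of_gt (mul_pos (mul_pos hp1 hp3) hp4))]
    push_cast
    push_cast at hcast
    linear_combination ((s:ℝ)+1) * hcast
  rw [sum_congr rfl hterm, ← sum_div]
  rw [← Nat.cast_sum]
  rw [choose_conv a b c]
  -- final comparison
  have hp1 : (0:ℝ) < ((s:ℝ)+1) := by positivity
  have hp3 : (0:ℝ) < (s.choose (a+b) : ℝ) := by
    exact_mod_cast Nat.choose_pos (by omega)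
  have hp4 : (0:ℝ) < ((a+b).choose a : ℝ) := by
    exact_mod_cast Nat.choose_pos (by omega)
  have hstep : (1:ℝ)/(((s:ℝ)+1) * ((a+b).choose a))
      = (s.choose (a+b) : ℝ) / (((s:ℝ)+1) * (s.choose (a+b)) * ((a+b).choose a)) := by
    rw [div_eq_div_iff (by positivity) (by positivity)]; ring
  rw [hstep, hcs]
  gcongr
  exact_mod_cast (by rw [Nat.choose_succ_succ]; omega :
    (a+b+c).choose (a+b) ≤ (a+b+c+1).choose (a+b+1))


theorem skew_bollobas_yue_partition (n m r : ℕ)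
    (X : Fin r → Finset (Fin n))
    (hXdisj : ∀ k l, k ≠ l → Disjoint (X k) (X l))
    (hXcover : (Finset.univ : Finset (Fin n)) = Finset.univ.biUnion X)
    (A B : Fin m → Finset (Fin n))
    (hdisj : ∀ i, Disjoint (A i) (B i))
    (hcross : ∀ i j, i < j → (A i ∩ B j).Nonempty) :
    ∑ i, ∏ k, (1 : ℝ) / (((A i ∩ X k).card + (B i ∩ X k).card).choose ((A i ∩ X k).card))
      ≤ ∏ k, (1 + (X k).card : ℝ) := by
  classical
  set w : ℕ → ℕ → ℝ := fun sk t => 1/(((sk:ℝ)+1) * (sk.choose t)) with hw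
  set tE : Fin m → Fin r → Finset (Finset (Fin n)) :=
    fun i k => ((X k).powerset).filter
      (fun T => A i ∩ X k ⊆ T ∧ Disjoint (B i ∩ X k) T) with htE
  set P : ℝ := ∏ k, (1 + ((X k).card : ℝ)) with hP
  have hP0 : 0 ≤ P := prod_nonneg (fun k _ => by positivity)
  -- step 1
  have hstep1 : ∀ i,
      ∏ k, (1:ℝ)/((((A i ∩ X k).card + (B i ∩ X k).card).choose ((A i ∩ X k).card)))
      ≤ P * ∑ p ∈ Fintype.piFinset (tE i), ∏ k, w (X k).card (p k).card := by
    intro i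
    rw [← Finset.prod_univ_sum (tE i) (fun k T => w (X k).card T.card), hP,
      ← prod_mul_distrib]
    apply prod_le_prod
    · intro k _; positivity
    · intro k _
      have hbound := part_sum_bound (X k) (A i ∩ X k) (B i ∩ X k)
        inter_subset_right inter_subset_right
        ((hdisj i).mono inter_subset_left inter_subset_left)
    -- rewrite the filter sum as the tE sum
      have hCpos : (0:ℝ) < ((((A i ∩ X k).card + (B i ∩ X k).card).choose ((A i ∩ X k).card) : ℕ) : ℝ) := by
        exact_mod_cast Nat.choose_pos (Nat.le_add_right _ _)
      have heq : (1:ℝ)/((((A i ∩ X k).card + (B i ∩ X k).card).choose ((A i ∩ X k).card)))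
          = (1 + ((X k).card:ℝ)) *
            ((1:ℝ)/((((X k).card:ℝ)+1) * ((((A i ∩ X k).card + (B i ∩ X k).card).choose ((A i ∩ X k).card))))) := by
        field_simp
        ring
      rw [heq]
      exact mul_le_mul_of_nonneg_left hbound (by positivity)
  -- disjointness of events
  have hkey : ∀ i j : Fin m, i < j →
      Disjoint (Fintype.piFinset (tE i)) (Fintype.piFinset (tE j)) := by
    intro i j hij
    obtain ⟨x, hx⟩ := hcross i j hij
    rw [mem_inter] at hx
    have hxk : ∃ k, x ∈ X k := by
      have hx' := mem_univ x
      rw [hXcover] at hx'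
      simpa using mem_biUnion.1 hx'
    obtain ⟨k, hk⟩ := hxk
    rw [Finset.disjoint_left]
    intro p hpi hpj
    have h1 := (Fintype.mem_piFinset.1 hpi) k
    have h2 := (Fintype.mem_piFinset.1 hpj) k
    simp only [htE, mem_filter] at h1 h2
    have hxp : x ∈ p k := h1.2.1 (mem_inter.2 ⟨hx.1, hk⟩)
    exact disjoint_left.1 h2.2.2 (mem_inter.2 ⟨hx.2, hk⟩) hxp
  have hPD : (↑(Finset.univ : Finset (Fin m)) : Set (Fin m)).PairwiseDisjoint
      (fun i => Fintype.piFinset (tE i)) := by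
    intro i _ j _ hij
    rcases lt_or_gt_of_ne hij with h | h
    · exact hkey i j h
    · exact (hkey j i h).symm
  -- sum of event weights ≤ 1
  have hsub : (Finset.univ : Finset (Fin m)).biUnion (fun i => Fintype.piFinset (tE i))
      ⊆ Fintype.piFinset (fun k => (X k).powerset) := by
    intro p hp
    obtain ⟨i, _, hpi⟩ := mem_biUnion.1 hp
    refine Fintype.mem_piFinset.2 (fun k => ?_)
    have := (Fintype.mem_piFinset.1 hpi) k
    simp only [htE, mem_filter] at this
    exact this.1
  have htot : ∑ p ∈ Fintype.piFinset (fun k => (X k).powerset),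
      ∏ k, w (X k).card (p k).card = 1 := by
    rw [← Finset.prod_univ_sum (fun k => (X k).powerset) (fun k T => w (X k).card T.card)]
    rw [prod_congr rfl (fun k _ => part_total (X k))]
    exact prod_const_one
  have hsumE : ∑ i, ∑ p ∈ Fintype.piFinset (tE i), ∏ k, w (X k).card (p k).card ≤ 1 := by
    rw [← sum_biUnion hPD]
    rw [← htot]
    refine sum_le_sum_of_subset_of_nonneg hsub (fun p _ _ => prod_nonneg (fun k _ => ?_))
    simp only [hw]
    positivity
  calc ∑ i, ∏ k, (1:ℝ)/((((A i ∩ X k).card + (B i ∩ X k).card).choose ((A i ∩ X k).card)))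
      ≤ ∑ i, P * ∑ p ∈ Fintype.piFinset (tE i), ∏ k, w (X k).card (p k).card :=
        sum_le_sum (fun i _ => hstep1 i)
    _ = P * ∑ i, ∑ p ∈ Fintype.piFinset (tE i), ∏ k, w (X k).card (p k).card := by
        rw [mul_sum]
    _ ≤ P * 1 := mul_le_mul_of_nonneg_left hsumE hP0
    _ = P := mul_one P
end

section
/- Suppose [n] is the disjoint union of subsets X_1, ..., X_r, and P = {(A_i, B_i) : i in [m]} is a skew Bollobás system of subsets of [n] with a_{i,k} = |A_i ∩ X_k| and b_{i,k} = |B_i ∩ X_k|. Then the sum over i of [∏_{k=1}^r binom(a_{i,k}+b_{i,k}, a_{i,k})·(1 + a_{i,k} + b_{i,k})]^{-1} is at most 1. -/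
open Finset MeasureTheory intervalIntegral

lemma beta_int' : ∀ (b a : ℕ), ∫ x in (0:ℝ)..1, x ^ a * (1 - x) ^ b
    = (a.factorial * b.factorial : ℝ) / (a + b + 1).factorial := by
  intro b
  induction b with
  | zero =>
    intro a
    have ha : ((a:ℝ) + 1) ≠ 0 := by positivity
    have ha' : (a.factorial : ℝ) ≠ 0 := by exact_mod_cast a.factorial_ne_zero
    simp only [pow_zero, mul_one, integral_pow, one_pow, Nat.add_zero, Nat.factorial_succ,
      Nat.factorial_zero]
    rw [zero_pow (by omega)]
    push_cast
    field_simp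
    norm_num
  | succ b ih =>
    intro a
    have hu : ∀ x ∈ Set.uIcc (0:ℝ) 1, HasDerivAt (fun x : ℝ => (1 - x) ^ (b+1))
        ((((b:ℝ)+1) * (1 - x) ^ b) * (-1)) x := by
      intro x _
      have h1 : HasDerivAt (fun x : ℝ => 1 - x) (-1) x := by
        simpa using (hasDerivAt_id' x).const_sub (1:ℝ)
      exact (h1.pow (b+1)).congr_deriv (by push_cast; ring)
    have hv : ∀ x ∈ Set.uIcc (0:ℝ) 1, HasDerivAt (fun x : ℝ => x ^ (a+1) / ((a:ℝ)+1))
        (x ^ a) x := by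
      intro x _
      have := (hasDerivAt_pow (a+1) x).div_const ((a:ℝ)+1)
      refine this.congr_deriv ?_
      have : ((a:ℝ) + 1) ≠ 0 := by positivity
      push_cast
      field_simp
    have key := integral_mul_deriv_eq_deriv_mul hu hv
      (by apply Continuous.intervalIntegrable; continuity)
      (by apply Continuous.intervalIntegrable; continuity)
    have hflip : (∫ x in (0:ℝ)..1, (1 - x) ^ (b+1) * x ^ a)
        = ∫ x in (0:ℝ)..1, x ^ a * (1 - x) ^ (b+1) := by
      congr 1; ext x; ring
    rw [hflip] at key
    rw [key]
    have expand : (∫ x in (0:ℝ)..1, (((b:ℝ)+1) * (1 - x) ^ b * (-1)) * (x ^ (a+1) / ((a:ℝ)+1)))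
        = (-(((b:ℝ)+1) / ((a:ℝ)+1))) * ∫ x in (0:ℝ)..1, x ^ (a+1) * (1 - x) ^ b := by
      rw [← intervalIntegral.integral_const_mul]
      congr 1; ext x; ring
    rw [expand, ih (a+1)]
    have h1 : ((a:ℝ) + 1) ≠ 0 := by positivity
    have h2 : ((a + 1 + b + 1).factorial : ℝ) ≠ 0 := by exact_mod_cast Nat.factorial_ne_zero _
    have h3 : (a + (b + 1) + 1) = (a + 1 + b) + 1 := by omega
    rw [h3, Nat.factorial_succ (a+1+b), Nat.factorial_succ a, Nat.factorial_succ b]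
    have h6 : ((a + 1 + b).factorial : ℝ) ≠ 0 := by exact_mod_cast Nat.factorial_ne_zero _
    have ha' : (a.factorial : ℝ) ≠ 0 := by exact_mod_cast a.factorial_ne_zero
    rw [sub_self, zero_pow (by omega), zero_pow (by omega)]
    push_cast
    field_simp
    ring


lemma prod_part {n r : ℕ} (X : Fin r → Finset (Fin n))
    (hXdisj : ∀ k l, k ≠ l → Disjoint (X k) (X l))
    (κ : Fin n → Fin r) (hκmem : ∀ x, x ∈ X (κ x))
    (hκ : ∀ x k, x ∈ X k → κ x = k)
    (C : Finset (Fin n)) (g : Fin r → ℝ) :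
    ∏ x ∈ C, g (κ x) = ∏ k, (g k) ^ (C ∩ X k).card := by
  have hC : C = univ.biUnion (fun k => C ∩ X k) := by
    ext x
    simp only [mem_biUnion, mem_univ, true_and, mem_inter]
    exact ⟨fun h => ⟨κ x, h, hκmem x⟩, fun ⟨k, h, _⟩ => h⟩
  calc ∏ x ∈ C, g (κ x) = ∏ k, ∏ x ∈ C ∩ X k, g (κ x) := by
        conv_lhs => rw [hC]
        exact Finset.prod_biUnion (fun k _ l _ hkl =>
          Finset.disjoint_of_subset_left inter_subset_right
            (Finset.disjoint_of_subset_right inter_subset_right (hXdisj k l hkl)))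
    _ = ∏ k, (g k) ^ (C ∩ X k).card := by
        refine Finset.prod_congr rfl fun k _ => ?_
        rw [Finset.prod_congr rfl (fun x hx => by rw [hκ x k (mem_inter.mp hx).2]),
          Finset.prod_const]

lemma core {n m : ℕ} (A B : Fin m → Finset (Fin n)) (hdisj : ∀ i, Disjoint (A i) (B i))
    (hcross : ∀ i j, i < j → (A i ∩ B j).Nonempty) (p : Fin n → ℝ)
    (hp0 : ∀ x, 0 ≤ p x) (hp1 : ∀ x, p x ≤ 1) :
    ∑ i, (∏ x ∈ A i, p x) * (∏ x ∈ B i, (1 - p x)) ≤ 1 := by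
  set w : Finset (Fin n) → ℝ := fun S => (∏ x ∈ S, p x) * ∏ x ∈ univ \ S, (1 - p x) with hw
  have hwnn : ∀ S, 0 ≤ w S := by
    intro S
    apply mul_nonneg <;> apply Finset.prod_nonneg <;> intro x _
    · exact hp0 x
    · linarith [hp1 x]
  have htotal : ∑ S ∈ univ.powerset, w S = 1 := by
    rw [← Finset.prod_add]
    simp
  set F : Fin m → Finset (Finset (Fin n)) :=
    fun i => univ.powerset.filter (fun S => A i ⊆ S ∧ S ∩ B i = ∅) with hF
  -- each term equals the sum of w over F i
  have hterm : ∀ i, (∏ x ∈ A i, p x) * (∏ x ∈ B i, (1 - p x)) = ∑ S ∈ F i, w S := by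
    intro i
    set R : Finset (Fin n) := ((univ \ A i) \ B i) with hR
    have hFi : F i = R.powerset.image (fun S => S ∪ A i) := by
      ext S
      simp only [hF, mem_filter, mem_powerset, mem_image]
      constructor
      · rintro ⟨-, hAS, hSB⟩
        refine ⟨S \ A i, ?_, ?_⟩
        · intro x hx
          obtain ⟨hxS, hxA⟩ := mem_sdiff.mp hx
          simp only [hR, mem_sdiff, mem_univ, true_and]
          refine ⟨hxA, fun hxB => ?_⟩
          have : x ∈ S ∩ B i := mem_inter.mpr ⟨hxS, hxB⟩
          simp [hSB] at this
        · rw [sdiff_union_self_eq_union, Finset.union_eq_left.mpr hAS]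
      · rintro ⟨T, hTR, rfl⟩
        refine ⟨subset_univ _, subset_union_right, ?_⟩
        rw [← Finset.disjoint_iff_inter_eq_empty]
        apply Finset.disjoint_union_left.mpr
        constructor
        · refine Finset.disjoint_left.mpr fun x hxT hxB => ?_
          have := hTR hxT
          simp only [hR, mem_sdiff] at this
          exact this.2 hxB
        · exact hdisj i
    have hinj : ∀ S ∈ R.powerset, ∀ T ∈ R.powerset,
        S ∪ A i = T ∪ A i → S = T := by
      intro S hS T hT h
      have hSdisj : ∀ U, U ∈ R.powerset → Disjoint U (A i) := by
        intro U hU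
        rw [mem_powerset] at hU
        refine Finset.disjoint_left.mpr fun x hxU hxA => ?_
        have := hU hxU
        simp [hR, mem_sdiff, hxA] at this
      have h1 : S = (S ∪ A i) \ A i := by
        rw [Finset.union_sdiff_cancel_right (hSdisj S hS)]
      have h2 : T = (T ∪ A i) \ A i := by
        rw [Finset.union_sdiff_cancel_right (hSdisj T hT)]
      rw [h1, h2, h]
    rw [hFi, Finset.sum_image hinj]
    have hwval : ∀ S ∈ R.powerset, w (S ∪ A i) =
        ((∏ x ∈ A i, p x) * (∏ x ∈ B i, (1 - p x))) *
        ((∏ x ∈ S, p x) * (∏ x ∈ R \ S, (1 - p x))) := by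
      intro S hS
      rw [mem_powerset] at hS
      have hSA : Disjoint S (A i) := by
        refine Finset.disjoint_left.mpr fun x hxS hxA => ?_
        have := hS hxS
        simp [hR, mem_sdiff, hxA] at this
      have hcompl : univ \ (S ∪ A i) = (B i) ∪ (R \ S) := by
        ext x
        have h1 : x ∈ S → x ∉ B i := by
          intro hxS hxB
          have := hS hxS
          simp [hR, mem_sdiff, hxB] at this
        have h2 : x ∈ S → x ∉ A i := fun hxS => Finset.disjoint_left.mp hSA hxS
        have h3 : x ∈ A i → x ∉ B i := fun hxA => Finset.disjoint_left.mp (hdisj i) hxA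
        simp only [hR, mem_sdiff, mem_union, mem_univ, true_and]
        tauto
      have hBR : Disjoint (B i) (R \ S) := by
        refine Finset.disjoint_left.mpr fun x hxB hxR => ?_
        rw [mem_sdiff] at hxR
        have := hxR.1
        simp [hR, mem_sdiff, hxB] at this
      rw [hw]
      simp only
      rw [Finset.prod_union hSA, hcompl, Finset.prod_union hBR]
      ring
    rw [Finset.sum_congr rfl hwval, ← Finset.mul_sum, ← Finset.prod_add]
    simp
  -- the families are pairwise disjoint
  have hpair : ((univ : Finset (Fin m)) : Set (Fin m)).PairwiseDisjoint F := by
    intro i _ j _ hij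
    refine Finset.disjoint_left.mpr fun S hSi hSj => ?_
    simp only [hF, mem_filter] at hSi hSj
    rcases lt_or_gt_of_ne hij with h | h
    · obtain ⟨x, hx⟩ := hcross i j h
      rw [mem_inter] at hx
      have hxS : x ∈ S := hSi.2.1 hx.1
      have : x ∈ S ∩ B j := mem_inter.mpr ⟨hxS, hx.2⟩
      simp [hSj.2.2] at this
    · obtain ⟨x, hx⟩ := hcross j i h
      rw [mem_inter] at hx
      have hxS : x ∈ S := hSj.2.1 hx.1
      have : x ∈ S ∩ B i := mem_inter.mpr ⟨hxS, hx.2⟩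
      simp [hSi.2.2] at this
  calc ∑ i, (∏ x ∈ A i, p x) * (∏ x ∈ B i, (1 - p x))
      = ∑ i, ∑ S ∈ F i, w S := by simp_rw [hterm]
    _ = ∑ S ∈ univ.biUnion F, w S := (Finset.sum_biUnion hpair).symm
    _ ≤ ∑ S ∈ univ.powerset, w S := by
        apply Finset.sum_le_sum_of_subset_of_nonneg
        · intro S hS
          exact mem_powerset.mpr (subset_univ S)
        · intro S _ _
          exact hwnn S
    _ = 1 := htotal


theorem skew_bollobas_set_partition_strengthening (n m r : ℕ)
    (X : Fin r → Finset (Fin n))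
    (hXdisj : ∀ k l, k ≠ l → Disjoint (X k) (X l))
    (hXcover : (Finset.univ : Finset (Fin n)) = Finset.univ.biUnion X)
    (A B : Fin m → Finset (Fin n))
    (hdisj : ∀ i, Disjoint (A i) (B i))
    (hcross : ∀ i j, i < j → (A i ∩ B j).Nonempty) :
    ∑ i, (∏ k, ((((A i ∩ X k).card + (B i ∩ X k).card).choose ((A i ∩ X k).card)) *
        (1 + (A i ∩ X k).card + (B i ∩ X k).card) : ℝ))⁻¹ ≤ 1 := by
  -- the classifying map
  have hex : ∀ x : Fin n, ∃ k, x ∈ X k := by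
    intro x
    have hx : x ∈ univ.biUnion X := by rw [← hXcover]; exact mem_univ x
    simpa using mem_biUnion.mp hx
  choose κ hκmem using hex
  have hκ : ∀ x k, x ∈ X k → κ x = k := by
    intro x k h
    by_contra hne
    exact Finset.disjoint_left.mp (hXdisj (κ x) k hne) (hκmem x) h
  set a : Fin m → Fin r → ℕ := fun i k => (A i ∩ X k).card with ha
  set b : Fin m → Fin r → ℕ := fun i k => (B i ∩ X k).card with hb
  set f : Fin m → Fin r → ℝ → ℝ := fun i k =>
    (Set.Icc (0:ℝ) 1).indicator (fun t => t ^ (a i k) * (1 - t) ^ (b i k)) with hf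
  -- value of each 1-dim integral
  have hval : ∀ i k, ∫ t : ℝ, f i k t
      = ((((a i k) + (b i k)).choose (a i k)) * (1 + (a i k) + (b i k)) : ℝ)⁻¹ := by
    intro i k
    rw [hf]
    rw [MeasureTheory.integral_indicator measurableSet_Icc, integral_Icc_eq_integral_Ioc,
      ← intervalIntegral.integral_of_le zero_le_one, beta_int']
    set p := a i k
    set q := b i k
    have hch : ((p + q).choose p * p.factorial * q.factorial : ℕ) = (p + q).factorial := by
      have := Nat.choose_mul_factorial_mul_factorial (Nat.le_add_right p q)
      rwa [Nat.add_sub_cancel_left] at this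
    have h1 : ((p + q + 1).factorial : ℝ) = (p + q + 1) * ((p+q).choose p * p.factorial * q.factorial) := by
      rw [Nat.factorial_succ, ← hch]
      push_cast
      ring
    rw [h1]
    have hc : (0:ℝ) < ((p+q).choose p : ℝ) := by
      exact_mod_cast Nat.choose_pos (Nat.le_add_right p q)
    have hp' : (0:ℝ) < (p.factorial : ℝ) := by exact_mod_cast p.factorial_pos
    have hq' : (0:ℝ) < (q.factorial : ℝ) := by exact_mod_cast q.factorial_pos
    have hpq : (0:ℝ) < (p:ℝ) + q + 1 := by positivity
    rw [eq_comm, inv_eq_iff_eq_inv, eq_comm, inv_div]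
    field_simp
    ring
  -- integrability of the one-dimensional pieces
  have hfint : ∀ i k, Integrable (f i k) := by
    intro i k
    rw [hf]
    refine (integrable_indicator_iff measurableSet_Icc).mpr ?_
    exact (Continuous.continuousOn (by continuity)).integrableOn_compact isCompact_Icc
  -- the product functions
  set G : Fin m → (Fin r → ℝ) → ℝ := fun i t => ∏ k, f i k (t k) with hG
  have hGint : ∀ i, Integrable (G i) := by
    intro i
    exact Integrable.fintype_prod (fun k => hfint i k)
  have hGval : ∀ i, ∫ t : Fin r → ℝ, G i t
      = ∏ k, ((((a i k) + (b i k)).choose (a i k)) * (1 + (a i k) + (b i k)) : ℝ)⁻¹ := by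
    intro i
    rw [hG]
    refine (MeasureTheory.integral_fintype_prod_eq_prod (f := f i) (μ := fun _ => volume)).trans ?_
    exact Finset.prod_congr rfl fun k _ => hval i k
  -- the box
  set box : Set (Fin r → ℝ) := Set.pi Set.univ (fun _ => Set.Icc (0:ℝ) 1) with hbox
  have hboxmeas : MeasurableSet box := MeasurableSet.univ_pi (fun _ => measurableSet_Icc)
  have hboxvol : volume box = 1 := by
    rw [hbox, volume_pi_pi]
    simp [Real.volume_Icc]
  -- pointwise bound
  have hbound : ∀ t : Fin r → ℝ, ∑ i, G i t ≤ box.indicator (fun _ => (1:ℝ)) t := by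
    intro t
    by_cases ht : t ∈ box
    · rw [Set.indicator_of_mem ht]
      have htk : ∀ k, t k ∈ Set.Icc (0:ℝ) 1 := fun k => ht k trivial
      have hGt : ∀ i, G i t = (∏ x ∈ A i, t (κ x)) * (∏ x ∈ B i, (1 - t (κ x))) := by
        intro i
        rw [hG]
        simp only
        calc ∏ k, f i k (t k) = ∏ k, (t k) ^ (a i k) * (1 - t k) ^ (b i k) :=
              Finset.prod_congr rfl fun k _ => Set.indicator_of_mem (htk k) _
          _ = (∏ k, (t k) ^ (a i k)) * (∏ k, (1 - t k) ^ (b i k)) := Finset.prod_mul_distrib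
          _ = (∏ x ∈ A i, t (κ x)) * (∏ x ∈ B i, (1 - t (κ x))) := by
              rw [prod_part X hXdisj κ hκmem hκ (A i) t,
                prod_part X hXdisj κ hκmem hκ (B i) (fun k => 1 - t k)]
      rw [Finset.sum_congr rfl (fun i _ => hGt i)]
      exact core A B hdisj hcross (fun x => t (κ x))
        (fun x => (htk (κ x)).1) (fun x => (htk (κ x)).2)
    · rw [Set.indicator_of_notMem ht]
      have hGt : ∀ i, G i t = 0 := by
        intro i
        obtain ⟨k0, hk0⟩ : ∃ k, t k ∉ Set.Icc (0:ℝ) 1 := by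
          by_contra h
          push_neg at h
          exact ht (fun k _ => h k)
        exact Finset.prod_eq_zero (mem_univ k0) (Set.indicator_of_notMem hk0 _)
      simp [hGt]
  have hindint : Integrable (box.indicator (fun _ => (1:ℝ))) := by
    refine (integrable_indicator_iff hboxmeas).mpr ?_
    refine integrableOn_const (ne_of_lt ?_)
    rw [hboxvol]
    exact ENNReal.one_lt_top
  calc ∑ i, (∏ k, ((((A i ∩ X k).card + (B i ∩ X k).card).choose ((A i ∩ X k).card)) *
        (1 + (A i ∩ X k).card + (B i ∩ X k).card) : ℝ))⁻¹
      = ∑ i, ∫ t : Fin r → ℝ, G i t := by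
        refine Finset.sum_congr rfl fun i _ => ?_
        rw [hGval i, ← Finset.prod_inv_distrib]
    _ = ∫ t : Fin r → ℝ, ∑ i, G i t :=
        (integral_finset_sum univ (fun i _ => hGint i)).symm
    _ ≤ ∫ t : Fin r → ℝ, box.indicator (fun _ => (1:ℝ)) t :=
        integral_mono (integrable_finset_sum univ (fun i _ => hGint i)) hindint hbound
    _ = 1 := by
        rw [MeasureTheory.integral_indicator_const _ hboxmeas, measureReal_def, hboxvol]
        simp
end

section
/- Let p_1, ..., p_d be positive reals with p_1 + ... + p_d = 1, and let P = {(A_i^{(1)}, ..., A_i^{(d)}) : i in [m]} be a weak Bollobás system of d-tuples of subsets of [n]. Then the sum over i of ∏_{ℓ=1}^d p_ℓ^{|A_i^{(ℓ)}|} is at most 1. -/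
/-!
Colour each point of the ground set independently, giving colour `ℓ` with probability `p ℓ`.
Call a colouring compatible with the tuple `i` if it gives colour `ℓ` to every point of `A i ℓ`;
since the parts of a tuple are disjoint, this event has probability `∏ ℓ, p ℓ ^ #(A i ℓ)`.
If `A i p` meets `A j q` with `p ≠ q`, no colouring is compatible with both tuples, so the
events are pairwise disjoint and their probabilities sum to at most one.
-/

open Finset Function

theorem sum_prod_colorings {α β : Type*} [Fintype α] [DecidableEq α] [Fintype β] (w : β → ℝ)
    (hw : ∑ ℓ, w ℓ = 1) : ∑ c : α → β, ∏ x, w (c x) = 1 := by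
  rw [← Fintype.prod_sum (fun (_ : α) ℓ => w ℓ), hw, prod_const_one]

section Colorings

variable {α β : Type*} [DecidableEq α] [Fintype β] [DecidableEq β]

/-- The colours a colouring compatible with `B` may give to `x`: `{ℓ}` if `x ∈ B ℓ`, and
every colour if `x` lies in no part (assuming the parts are disjoint). -/
def allowedColors (B : β → Finset α) (x : α) : Finset β :=
  univ.filter fun ℓ => ∀ ℓ', x ∈ B ℓ' → ℓ = ℓ'

theorem sum_allowedColors {B : β → Finset α} (hB : Pairwise (Disjoint on B)) (w : β → ℝ)
    (hw : ∑ ℓ, w ℓ = 1) (x : α) :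
    ∑ ℓ ∈ allowedColors B x, w ℓ = ∏ ℓ, if x ∈ B ℓ then w ℓ else 1 := by
  by_cases hx : ∃ ℓ₀, x ∈ B ℓ₀
  · obtain ⟨ℓ₀, hℓ₀⟩ := hx
    have hnot : ∀ ℓ ≠ ℓ₀, x ∉ B ℓ := fun ℓ hℓ hxℓ =>
      disjoint_left.mp (hB hℓ) hxℓ hℓ₀
    have hallowed : allowedColors B x = {ℓ₀} := by
      ext ℓ
      simp only [allowedColors, mem_filter, mem_univ, true_and, mem_singleton]
      refine ⟨fun h => h ℓ₀ hℓ₀, fun h ℓ' hxℓ' => ?_⟩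
      by_contra hne
      exact hnot ℓ' (Ne.symm (h ▸ hne)) hxℓ'
    rw [hallowed, sum_singleton, Fintype.prod_eq_single ℓ₀ fun ℓ hℓ => if_neg (hnot ℓ hℓ),
      if_pos hℓ₀]
  · simp only [not_exists] at hx
    have hallowed : allowedColors B x = univ := by
      ext ℓ
      simp [allowedColors, hx]
    simp [hallowed, hx, hw]

variable [Fintype α]

def compatibleColorings (B : β → Finset α) : Finset (α → β) :=
  Fintype.piFinset (allowedColors B)

theorem mem_compatibleColorings {B : β → Finset α} {c : α → β} :
    c ∈ compatibleColorings B ↔ ∀ ℓ, ∀ x ∈ B ℓ, c x = ℓ := by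
  simp only [compatibleColorings, allowedColors, Fintype.mem_piFinset, mem_filter, mem_univ,
    true_and]
  exact forall_comm

theorem sum_compatibleColorings_prod {B : β → Finset α} (hB : Pairwise (Disjoint on B))
    (w : β → ℝ) (hw : ∑ ℓ, w ℓ = 1) :
    ∑ c ∈ compatibleColorings B, ∏ x, w (c x) = ∏ ℓ, w ℓ ^ (B ℓ).card := calc
  ∑ c ∈ compatibleColorings B, ∏ x, w (c x)
      = ∏ x, ∏ ℓ, if x ∈ B ℓ then w ℓ else 1 := by
    rw [compatibleColorings, ← prod_univ_sum]
    exact prod_congr rfl fun x _ => sum_allowedColors hB w hw x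
  _ = ∏ ℓ, w ℓ ^ (B ℓ).card := by
    rw [prod_comm]
    simp only [Fintype.prod_ite_mem, prod_const]

theorem disjoint_compatibleColorings {B B' : β → Finset α} {p q : β} (hpq : p ≠ q)
    (hmeet : (B p ∩ B' q).Nonempty) :
    Disjoint (compatibleColorings B) (compatibleColorings B') := by
  obtain ⟨x, hx⟩ := hmeet
  rw [mem_inter] at hx
  refine disjoint_left.mpr fun c hc hc' => hpq ?_
  rw [← mem_compatibleColorings.mp hc p x hx.1, mem_compatibleColorings.mp hc' q x hx.2]

end Colorings

theorem sum_prod_pow_card_le_one {ι α β : Type*} [Fintype ι] [Fintype α] [DecidableEq α]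
    [Fintype β] [DecidableEq β] (w : β → ℝ) (hw₀ : ∀ ℓ, 0 ≤ w ℓ) (hw : ∑ ℓ, w ℓ = 1)
    (A : ι → β → Finset α) (hdisj : ∀ i, Pairwise (Disjoint on A i))
    (hcross : Pairwise fun i j => ∃ p q, p ≠ q ∧ (A i p ∩ A j q).Nonempty) :
    ∑ i, ∏ ℓ, w ℓ ^ (A i ℓ).card ≤ 1 := by
  have hE : (↑(univ : Finset ι) : Set ι).PairwiseDisjoint fun i => compatibleColorings (A i) :=
    (hcross.mono fun _ _ ⟨_, _, hpq, hmeet⟩ => disjoint_compatibleColorings hpq hmeet).set_pairwise _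
  calc ∑ i, ∏ ℓ, w ℓ ^ (A i ℓ).card
      = ∑ i, ∑ c ∈ compatibleColorings (A i), ∏ x, w (c x) :=
        sum_congr rfl fun i _ => (sum_compatibleColorings_prod (hdisj i) w hw).symm
    _ = ∑ c ∈ univ.biUnion fun i => compatibleColorings (A i), ∏ x, w (c x) :=
        (sum_biUnion hE).symm
    _ ≤ ∑ c : α → β, ∏ x, w (c x) :=
        sum_le_sum_of_subset_of_nonneg (subset_univ _) fun c _ _ =>
          prod_nonneg fun x _ => hw₀ (c x)
    _ = 1 := sum_prod_colorings w hw

theorem tuza_weak_bollobas (n m d : ℕ) (p : Fin d → ℝ)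
    (hp : ∀ ℓ, 0 < p ℓ) (hsum : ∑ ℓ, p ℓ = 1)
    (A : Fin m → Fin d → Finset (Fin n))
    (hdisj : ∀ i, ∀ p q : Fin d, p ≠ q → Disjoint (A i p) (A i q))
    (hcross : ∀ i j, i < j → ∃ p q : Fin d, p < q ∧
      ((A i p ∩ A j q).Nonempty ∨ (A i q ∩ A j p).Nonempty)) :
    ∑ i, ∏ ℓ, p ℓ ^ (A i ℓ).card ≤ 1 := by
  refine sum_prod_pow_card_le_one p (fun ℓ => (hp ℓ).le) hsum A hdisj ?_
  have hlt : ∀ i j, i < j → ∃ a b, a ≠ b ∧ (A i a ∩ A j b).Nonempty := by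
    intro i j hij
    obtain ⟨a, b, hab, hmeet | hmeet⟩ := hcross i j hij
    exacts [⟨a, b, hab.ne, hmeet⟩, ⟨b, a, hab.ne', hmeet⟩]
  intro i j hij
  rcases hij.lt_or_gt with hij | hji
  · exact hlt i j hij
  · obtain ⟨a, b, hab, hmeet⟩ := hlt j i hji
    exact ⟨b, a, hab.symm, by rwa [inter_comm]⟩
end

section
/- If P = {(A_i, B_i) : i in [m]} is a weak Bollobás system of pairs of subsets of [n] with |A_i| = a and |B_i| = b for every i, then m ≤ (a+b)^{a+b} / (a^a · b^b). -/
open Finset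

lemma sum_pow_powerset {α : Type*} [DecidableEq α] (s : Finset α) (p q : ℝ) :
    ∑ T ∈ s.powerset, p ^ T.card * q ^ (s.card - T.card) = (p + q) ^ s.card := by
  rw [← Finset.prod_const, Finset.prod_add]
  apply Finset.sum_congr rfl
  intro T hT
  rw [Finset.mem_powerset] at hT
  rw [Finset.prod_const, Finset.prod_const, Finset.card_sdiff_of_subset hT]

lemma event_sum (n : ℕ) (C D : Finset (Fin n)) (hCD : Disjoint C D) (p q : ℝ) :
    ∑ S ∈ Finset.univ.powerset.filter (fun S => C ⊆ S ∧ Disjoint S D),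
      p ^ S.card * q ^ (n - S.card)
    = p ^ C.card * q ^ D.card * (p + q) ^ (n - C.card - D.card) := by
  have hcd : C.card + D.card ≤ n := by
    have h1 : (C ∪ D).card = C.card + D.card := Finset.card_union_of_disjoint hCD
    have h2 : (C ∪ D).card ≤ n := by
      simpa using Finset.card_le_card (Finset.subset_univ (C ∪ D))
    omega
  have hR : (Finset.univ \ (C ∪ D)).card = n - C.card - D.card := by
    rw [Finset.card_sdiff_of_subset (Finset.subset_univ _), Finset.card_union_of_disjoint hCD,
      Finset.card_univ, Fintype.card_fin]
    omega
  rw [← hR, ← sum_pow_powerset, Finset.mul_sum]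
  apply Finset.sum_bij' (fun S _ => S \ C) (fun T _ => T ∪ C)
  · intro S hS
    simp only [Finset.mem_filter, Finset.mem_powerset] at hS
    obtain ⟨-, hCS, hSD⟩ := hS
    rw [Finset.mem_powerset]
    intro x hx
    rw [Finset.mem_sdiff] at hx ⊢
    refine ⟨Finset.mem_univ x, fun hmem => ?_⟩
    rcases Finset.mem_union.mp hmem with h | h
    · exact hx.2 h
    · exact Finset.disjoint_left.mp hSD hx.1 h
  · intro T hT
    rw [Finset.mem_powerset] at hT
    simp only [Finset.mem_filter, Finset.mem_powerset]
    refine ⟨Finset.subset_univ _, Finset.subset_union_right, ?_⟩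
    rw [Finset.disjoint_union_left]
    refine ⟨Finset.disjoint_left.mpr fun x hxT hxD => ?_, hCD⟩
    exact (Finset.mem_sdiff.mp (hT hxT)).2 (Finset.mem_union_right _ hxD)
  · intro S hS
    simp only [Finset.mem_filter, Finset.mem_powerset] at hS
    exact Finset.sdiff_union_of_subset hS.2.1
  · intro T hT
    rw [Finset.mem_powerset] at hT
    have hTC : Disjoint T C := Finset.disjoint_left.mpr fun x hxT hxC =>
      (Finset.mem_sdiff.mp (hT hxT)).2 (Finset.mem_union_left _ hxC)
    rw [Finset.union_sdiff_cancel_right hTC]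
  · intro S hS
    simp only [Finset.mem_filter, Finset.mem_powerset] at hS
    obtain ⟨-, hCS, hSD⟩ := hS
    have hScard : S.card ≤ n := by simpa using Finset.card_le_card (Finset.subset_univ S)
    have h1 : (S \ C).card = S.card - C.card := Finset.card_sdiff_of_subset hCS
    have h2 : C.card ≤ S.card := Finset.card_le_card hCS
    have h4 : S.card + D.card ≤ n := by
      have hu := Finset.card_union_of_disjoint hSD
      have h2' : (S ∪ D).card ≤ n := by
        simpa using Finset.card_le_card (Finset.subset_univ (S ∪ D))
      omega
    have e1 : S.card = C.card + (S \ C).card := by omega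
    have e2 : n - S.card = D.card + ((Finset.univ \ (C ∪ D)).card - (S \ C).card) := by omega
    rw [e2, e1, pow_add, pow_add]
    ring

theorem tuza_weak_pair_uniform (n m a b : ℕ)
    (A B : Fin m → Finset (Fin n))
    (hdisj : ∀ i, Disjoint (A i) (B i))
    (hcross : ∀ i j, i < j → (A i ∩ B j).Nonempty ∨ (A j ∩ B i).Nonempty)
    (hA : ∀ i, (A i).card = a) (hB : ∀ i, (B i).card = b) :
    (m : ℝ) ≤ (a + b) ^ (a + b) / (a ^ a * b ^ b) := by
  have hm1 : (a = 0 ∨ b = 0) → m ≤ 1 := by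
    intro hab
    by_contra hm
    push_neg at hm
    have h01 : (⟨0, by omega⟩ : Fin m) < (⟨1, hm⟩ : Fin m) := by
      simp [Fin.lt_def]
    rcases hcross _ _ h01 with ⟨x, hx⟩ | ⟨x, hx⟩ <;> rw [Finset.mem_inter] at hx <;>
      rcases hab with h | h
    · exact absurd hx.1 (by simp [Finset.card_eq_zero.mp ((hA _).trans h)])
    · exact absurd hx.2 (by simp [Finset.card_eq_zero.mp ((hB _).trans h)])
    · exact absurd hx.1 (by simp [Finset.card_eq_zero.mp ((hA _).trans h)])
    · exact absurd hx.2 (by simp [Finset.card_eq_zero.mp ((hB _).trans h)])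
  rcases Nat.eq_zero_or_pos a with ha | ha
  · subst ha
    have hm := hm1 (Or.inl rfl)
    simp only [Nat.cast_zero, zero_add, pow_zero, one_mul]
    rcases Nat.eq_zero_or_pos b with hb | hb
    · subst hb; norm_num; exact_mod_cast hm
    · rw [div_self (pow_ne_zero _ (Nat.cast_ne_zero.mpr hb.ne'))]
      exact_mod_cast hm
  rcases Nat.eq_zero_or_pos b with hb | hb
  · subst hb
    have hm := hm1 (Or.inr rfl)
    simp only [Nat.cast_zero, add_zero, pow_zero, mul_one]
    rw [div_self (pow_ne_zero _ (Nat.cast_ne_zero.mpr ha.ne'))]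
    exact_mod_cast hm
  -- main case: a, b > 0
  set s : ℝ := (a : ℝ) + b with hs_def
  have hs : 0 < s := by positivity
  set p : ℝ := a / s with hp_def
  set q : ℝ := b / s with hq_def
  have hp : 0 ≤ p := by positivity
  have hq : 0 ≤ q := by positivity
  have hpq : p + q = 1 := by rw [hp_def, hq_def, ← add_div, ← hs_def]; exact div_self hs.ne'
  set E : Fin m → Finset (Finset (Fin n)) :=
    fun i => Finset.univ.powerset.filter (fun S => A i ⊆ S ∧ Disjoint S (B i)) with hE_def
  have key : ∀ i, ∑ S ∈ E i, p ^ S.card * q ^ (n - S.card) = p ^ a * q ^ b := by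
    intro i
    rw [hE_def, event_sum n (A i) (B i) (hdisj i) p q, hA, hB, hpq, one_pow, mul_one]
  have hpd : ((Finset.univ : Finset (Fin m)) : Set (Fin m)).PairwiseDisjoint E := by
    intro i _ j _ hij
    have main : ∀ i j : Fin m, i < j → Disjoint (E i) (E j) := by
      intro i j hij
      rw [Finset.disjoint_left]
      intro S hSi hSj
      simp only [hE_def, Finset.mem_filter] at hSi hSj
      rcases hcross i j hij with ⟨x, hx⟩ | ⟨x, hx⟩ <;> rw [Finset.mem_inter] at hx
      · exact Finset.disjoint_left.mp hSj.2.2 (hSi.2.1 hx.1) hx.2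
      · exact Finset.disjoint_left.mp hSi.2.2 (hSj.2.1 hx.1) hx.2
    rcases lt_or_gt_of_ne hij with h | h
    · exact main i j h
    · exact (main j i h).symm
  have husum : ∑ T ∈ (Finset.univ : Finset (Fin n)).powerset,
      p ^ T.card * q ^ (n - T.card) = 1 := by
    have h := sum_pow_powerset (Finset.univ : Finset (Fin n)) p q
    simp only [Finset.card_univ, Fintype.card_fin] at h
    rw [h, hpq, one_pow]
  have hsum : (m : ℝ) * (p ^ a * q ^ b) ≤ 1 := by
    calc (m : ℝ) * (p ^ a * q ^ b)
        = ∑ _i : Fin m, p ^ a * q ^ b := by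
          rw [Finset.sum_const, Finset.card_univ, Fintype.card_fin, nsmul_eq_mul]
      _ = ∑ i : Fin m, ∑ S ∈ E i, p ^ S.card * q ^ (n - S.card) :=
          Finset.sum_congr rfl fun i _ => (key i).symm
      _ = ∑ S ∈ Finset.univ.biUnion E, p ^ S.card * q ^ (n - S.card) :=
          (Finset.sum_biUnion hpd).symm
      _ ≤ ∑ T ∈ (Finset.univ : Finset (Fin n)).powerset, p ^ T.card * q ^ (n - T.card) := by
          apply Finset.sum_le_sum_of_subset_of_nonneg
          · exact Finset.biUnion_subset.mpr fun i _ => Finset.filter_subset _ _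
          · intro S _ _; positivity
      _ = 1 := husum
  have hw : p ^ a * q ^ b = ((a : ℝ) ^ a * (b : ℝ) ^ b) / s ^ (a + b) := by
    rw [hp_def, hq_def, div_pow, div_pow, div_mul_div_comm, ← pow_add]
  rw [hw] at hsum
  rw [le_div_iff₀ (by positivity : (0 : ℝ) < (a : ℝ) ^ a * (b : ℝ) ^ b)]
  have hspow : (0 : ℝ) < s ^ (a + b) := by positivity
  have h2 := mul_le_mul_of_nonneg_right hsum hspow.le
  rw [one_mul] at h2
  calc (m : ℝ) * ((a : ℝ) ^ a * (b : ℝ) ^ b)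
      = (m : ℝ) * ((a : ℝ) ^ a * (b : ℝ) ^ b / s ^ (a + b)) * s ^ (a + b) := by
        field_simp
    _ ≤ s ^ (a + b) := h2
end

section
/- If P = {(A_i, B_i) : i in [m]} is a skew Bollobás system of subspaces of an n-dimensional real vector space V, then m ≤ 2^n. -/
open ExteriorAlgebra Module Submodule

section Aux

variable {V : Type*} [AddCommGroup V] [Module ℝ V]

private lemma sb_comp_append {α β : Type*} {p q : ℕ} (g : α → β) (u : Fin p → α) (w : Fin q → α) :
    (fun i => g (Fin.append u w i)) = Fin.append (g ∘ u) (g ∘ w) := by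
  funext i
  induction i using Fin.addCases with
  | left i => simp [Fin.append_left]
  | right i => simp [Fin.append_right]

private lemma sb_iotaMulti_mul {p q : ℕ} (u : Fin p → V) (w : Fin q → V) :
    ιMulti ℝ (p + q) (Fin.append u w) = ιMulti ℝ p u * ιMulti ℝ q w := by
  rw [ιMulti_apply, ιMulti_apply, ιMulti_apply, ← List.prod_append, ← List.ofFn_fin_append]
  exact congrArg List.prod (congrArg List.ofFn (by rw [sb_comp_append (ι ℝ) u w]; rfl))

private lemma sb_iotaMulti_cast {k l : ℕ} (h : k = l) (f : Fin l → V) :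
    ιMulti ℝ k (f ∘ Fin.cast h) = ιMulti ℝ l f := by
  subst h
  congr

private instance sb_nzsd : NoZeroSMulDivisors ℝ (ExteriorAlgebra ℝ V) :=
  ⟨fun {c x} h => by
    by_cases hc : c = 0
    · exact Or.inl hc
    · right
      have := congrArg (fun y => c⁻¹ • y) h
      simpa [smul_smul, inv_mul_cancel₀ hc] using this⟩

/-- The wedge of a linearly independent family is nonzero. -/
private lemma sb_iotaMulti_ne_zero {k : ℕ} {f : Fin k → V}
    (hf : LinearIndependent ℝ f) : ιMulti ℝ k f ≠ 0 := by
  classical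
  -- coordinates on the span
  set S : Submodule ℝ V := Submodule.span ℝ (Set.range f)
  let b : Basis (Fin k) ℝ S := Basis.span hf
  obtain ⟨g, hg⟩ := LinearMap.exists_extend ((b.equivFun : S →ₗ[ℝ] (Fin k → ℝ)))
  have hgf : ∀ i, g (f i) = Pi.single i 1 := by
    intro i
    have h1 : ((b i : S) : V) = f i := congrArg Subtype.val (Basis.span_apply hf i)
    have h2 : g ((b i : S) : V) = b.equivFun (b i) := by
      have := congrArg (fun φ => φ (b i)) hg
      simpa using this
    rw [← h1, h2]
    funext j
    simp [Basis.equivFun_apply, Finsupp.single_apply, Pi.single_apply, eq_comm]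
  -- determinant functional
  let F : V [⋀^Fin k]→ₗ[ℝ] ℝ := (Matrix.detRowAlternating (R := ℝ) (n := Fin k)).compLinearMap g
  have hF : F f = 1 := by
    have : (fun i => g (f i)) = (1 : Matrix (Fin k) (Fin k) ℝ) := by
      funext i j
      rw [hgf i]
      simp [Matrix.one_apply, Pi.single_apply, eq_comm]
    have h2 : F f = Matrix.det (Matrix.of fun i => g (f i)) := rfl
    rw [h2, show Matrix.of (fun i => g (f i)) = (1 : Matrix (Fin k) (Fin k) ℝ) from this,
      Matrix.det_one]
  let G : ∀ i : ℕ, V [⋀^Fin i]→ₗ[ℝ] ℝ := Function.update (fun _ => 0) k F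
  intro h0
  have := liftAlternating_apply_ιMulti (R := ℝ) (M := V) (N := ℝ) G f
  rw [h0] at this
  simp only [map_zero] at this
  have hGk : G k = F := Function.update_self _ _ _
  rw [hGk, hF] at this
  exact one_ne_zero this.symm

private lemma sb_append_indep {p q : ℕ} {u : Fin p → V} {w : Fin q → V}
    (hu : LinearIndependent ℝ u) (hw : LinearIndependent ℝ w)
    (h : Disjoint (Submodule.span ℝ (Set.range u)) (Submodule.span ℝ (Set.range w))) :
    LinearIndependent ℝ (Fin.append u w) := by
  have hsum : LinearIndependent ℝ (Sum.elim u w) := linearIndependent_sum.2 ⟨hu, hw, h⟩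
  have := hsum.comp _ (finSumFinEquiv.symm.injective)
  convert this using 1
  funext i
  induction i using Fin.addCases with
  | left i => simp [Fin.append_left]
  | right i => simp [Fin.append_right]

private lemma sb_append_dep {p q : ℕ} {u : Fin p → V} {w : Fin q → V}
    (h : ¬ Disjoint (Submodule.span ℝ (Set.range u)) (Submodule.span ℝ (Set.range w))) :
    ¬ LinearIndependent ℝ (Fin.append u w) := by
  intro hli
  apply h
  have : LinearIndependent ℝ (Sum.elim u w) := by
    have := hli.comp _ (finSumFinEquiv.injective)
    convert this using 1
    funext i
    cases i with
    | inl i => simp [Fin.append_left]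
    | inr i => simp [Fin.append_right]
  exact (linearIndependent_sum.1 this).2.2

/-- wedges of basis-indexed families span everything `ιMulti` can reach. -/
private lemma sb_mem_span {n : ℕ} (bV : Basis (Fin n) ℝ V) (k : ℕ) (f : Fin k → V) :
    ιMulti ℝ k f ∈ Submodule.span ℝ
      (Set.range (fun S : Finset (Fin n) =>
        ιMulti ℝ S.card (fun i => bV ((S.orderIsoOfFin rfl i : Fin n))))) := by
  classical
  set e : Finset (Fin n) → ExteriorAlgebra ℝ V := fun S =>
    ιMulti ℝ S.card (fun i => bV ((S.orderIsoOfFin rfl i : Fin n))) with he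
  -- expand f in the basis
  have hexp : ιMulti ℝ k f
      = ∑ r : Fin k → Fin n, (∏ t, bV.repr (f t) (r t)) • ιMulti ℝ k (fun t => bV (r t)) := by
    have h1 : ∀ t, f t = ∑ j : Fin n, (bV.repr (f t) j) • bV j := by
      intro t
      exact (Basis.sum_equivFun bV (f t)).symm
    calc ιMulti ℝ k f = ιMulti ℝ k (fun t => ∑ j : Fin n, (bV.repr (f t) j) • bV j) := by
          congr 1; funext t; exact h1 t
      _ = ∑ r : Fin k → Fin n, ιMulti ℝ k (fun t => (bV.repr (f t) (r t)) • bV (r t)) := by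
          exact (ιMulti ℝ k).toMultilinearMap.map_sum (fun t j => (bV.repr (f t) j) • bV j)
      _ = ∑ r : Fin k → Fin n, (∏ t, bV.repr (f t) (r t)) • ιMulti ℝ k (fun t => bV (r t)) := by
          refine Finset.sum_congr rfl (fun r _ => ?_)
          exact (ιMulti ℝ k).toMultilinearMap.map_smul_univ (fun t => bV.repr (f t) (r t))
            (fun t => bV (r t))
  rw [hexp]
  refine Submodule.sum_mem _ (fun r _ => Submodule.smul_mem _ _ ?_)
  by_cases hr : Function.Injective r
  · -- reorder to the sorted enumeration
    set S : Finset (Fin n) := Finset.univ.image r with hS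
    have hcard : S.card = k := by
      rw [hS, Finset.card_image_of_injective _ hr, Finset.card_univ, Fintype.card_fin]
    -- the cast trick
    rw [← sb_iotaMulti_cast hcard (fun t => bV (r t))]
    -- bijection between Fin S.card and S through r ∘ cast
    have hmem : ∀ i : Fin S.card, r (Fin.cast hcard i) ∈ S := by
      intro i
      exact Finset.mem_image_of_mem _ (Finset.mem_univ _)
    let r' : Fin S.card → S := fun i => ⟨r (Fin.cast hcard i), hmem i⟩
    have hr' : Function.Bijective r' := by
      rw [Fintype.bijective_iff_injective_and_card]
      constructor
      · intro a b hab
        have := hr (congrArg Subtype.val hab)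
        exact Fin.cast_injective _ this
      · simp
    let σ : Fin S.card ≃ Fin S.card := (Equiv.ofBijective r' hr').trans (S.orderIsoOfFin rfl).toEquiv.symm
    have hcomp : ((fun t => bV (r t)) ∘ Fin.cast hcard)
        = (fun i => bV ((S.orderIsoOfFin rfl i : Fin n))) ∘ σ := by
      funext i
      show bV (r (Fin.cast hcard i)) = bV ((S.orderIsoOfFin rfl (σ i) : Fin n))
      congr 1
      show (r' i : Fin n) = _
      have : (S.orderIsoOfFin rfl) (σ i) = r' i := by
        simp [σ]
      rw [this]
    rw [hcomp, AlternatingMap.map_perm]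
    exact Submodule.smul_mem _ _ (Submodule.subset_span ⟨S, rfl⟩)
  · -- repeated index, so the wedge vanishes
    rw [Function.not_injective_iff] at hr
    obtain ⟨a, b, hab, hne⟩ := hr
    have : ιMulti ℝ k (fun t => bV (r t)) = 0 :=
      AlternatingMap.map_eq_zero_of_eq _ _ (by rw [hab]) hne
    rw [this]
    exact Submodule.zero_mem _

end Aux

theorem skew_bollobas_subspace_bound (n m : ℕ)
    (V : Type*) [AddCommGroup V] [Module ℝ V] [FiniteDimensional ℝ V]
    (hV : Module.finrank ℝ V = n)
    (A B : Fin m → Submodule ℝ V)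
    (hdisj : ∀ i, Module.finrank ℝ ↥(A i ⊓ B i) = 0)
    (hcross : ∀ i j, i < j → 0 < Module.finrank ℝ ↥(A i ⊓ B j)) :
    m ≤ 2 ^ n := by
  classical
  -- bases of the subspaces, as families in V
  set a : Fin m → ℕ := fun i => Module.finrank ℝ ↥(A i) with ha
  set b : Fin m → ℕ := fun i => Module.finrank ℝ ↥(B i) with hb
  let uA : ∀ i, Fin (a i) → V := fun i t => ((Module.finBasis ℝ ↥(A i)) t : V)
  let uB : ∀ i, Fin (b i) → V := fun i t => ((Module.finBasis ℝ ↥(B i)) t : V)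
  have hindepA : ∀ i, LinearIndependent ℝ (uA i) := fun i =>
    (Module.finBasis ℝ ↥(A i)).linearIndependent.map' (A i).subtype (A i).ker_subtype
  have hindepB : ∀ i, LinearIndependent ℝ (uB i) := fun i =>
    (Module.finBasis ℝ ↥(B i)).linearIndependent.map' (B i).subtype (B i).ker_subtype
  have hspanA : ∀ i, Submodule.span ℝ (Set.range (uA i)) = A i := by
    intro i
    have : Set.range (uA i) = (A i).subtype '' Set.range (Module.finBasis ℝ ↥(A i)) := by
      rw [← Set.range_comp]; rfl
    rw [this, Submodule.span_image, Basis.span_eq, Submodule.map_subtype_top]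
  have hspanB : ∀ i, Submodule.span ℝ (Set.range (uB i)) = B i := by
    intro i
    have : Set.range (uB i) = (B i).subtype '' Set.range (Module.finBasis ℝ ↥(B i)) := by
      rw [← Set.range_comp]; rfl
    rw [this, Submodule.span_image, Basis.span_eq, Submodule.map_subtype_top]
  -- the wedges
  let ω : Fin m → ExteriorAlgebra ℝ V := fun i => ιMulti ℝ (a i) (uA i)
  let τ : Fin m → ExteriorAlgebra ℝ V := fun i => ιMulti ℝ (b i) (uB i)
  -- key vanishing / non-vanishing
  have K1 : ∀ i j, i < j → ω i * τ j = 0 := by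
    intro i j hij
    rw [show ω i * τ j = ιMulti ℝ (a i + b j) (Fin.append (uA i) (uB j)) from
      (sb_iotaMulti_mul _ _).symm]
    apply AlternatingMap.map_linearDependent (N := ExteriorAlgebra ℝ V)
    apply sb_append_dep
    rw [hspanA, hspanB, disjoint_iff]
    intro hbot
    have := hcross i j hij
    rw [hbot] at this
    simp at this
  have K2 : ∀ i, ω i * τ i ≠ 0 := by
    intro i
    rw [show ω i * τ i = ιMulti ℝ (a i + b i) (Fin.append (uA i) (uB i)) from
      (sb_iotaMulti_mul _ _).symm]
    apply sb_iotaMulti_ne_zero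
    apply sb_append_indep (hindepA i) (hindepB i)
    rw [hspanA, hspanB, disjoint_iff]
    rw [← Submodule.finrank_eq_zero (R := ℝ)]
    exact hdisj i
  -- linear independence of the ω's by the triangular argument
  have hli : LinearIndependent ℝ ω := by
    rw [linearIndependent_iff']
    intro s g hsum
    have key : ∀ t : ℕ, ∀ j : Fin m, j ∈ s → m - (j : ℕ) ≤ t → g j = 0 := by
      intro t
      induction t with
      | zero => intro j _ hle; omega
      | succ t ih =>
        intro j hj _
        have hmul : (∑ i ∈ s, g i • ω i) * τ j = 0 := by rw [hsum, zero_mul]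
        rw [Finset.sum_mul] at hmul
        have hsingle : ∑ i ∈ s, (g i • ω i) * τ j = (g j • ω j) * τ j := by
          refine Finset.sum_eq_single j (fun i hi hne => ?_) (fun h => absurd hj h)
          rcases lt_or_gt_of_ne hne with hlt | hgt
          · rw [smul_mul_assoc, K1 i j hlt, smul_zero]
          · have : g i = 0 := ih i hi (by omega)
            rw [this, zero_smul, zero_mul]
        rw [hsingle, smul_mul_assoc] at hmul
        rcases smul_eq_zero.1 hmul with h | h
        · exact h
        · exact absurd h (K2 j)
    intro i hi
    exact key m i hi (by omega)
  -- the spanning set of size 2 ^ n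
  let bV : Basis (Fin n) ℝ V := (Module.finBasis ℝ V).reindex (finCongr hV)
  let e : Finset (Fin n) → ExteriorAlgebra ℝ V := fun S =>
    ιMulti ℝ S.card (fun i => bV ((S.orderIsoOfFin rfl i : Fin n)))
  set W : Submodule ℝ (ExteriorAlgebra ℝ V) := Submodule.span ℝ (Set.range e) with hW
  have hmem : ∀ i, ω i ∈ W := fun i => sb_mem_span bV (a i) (uA i)
  haveI : FiniteDimensional ℝ W := FiniteDimensional.span_of_finite ℝ (Set.finite_range e)
  -- m ≤ finrank W
  let ω' : Fin m → W := fun i => ⟨ω i, hmem i⟩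
  have hli' : LinearIndependent ℝ ω' := by
    apply LinearIndependent.of_comp W.subtype
    exact hli
  have h1 : m ≤ Module.finrank ℝ W := by
    simpa using hli'.fintype_card_le_finrank
  -- finrank W ≤ 2 ^ n
  have h2 : Module.finrank ℝ W ≤ 2 ^ n := by
    haveI : Fintype (Set.range e) := Set.fintypeRange e
    refine le_trans (finrank_span_le_card (R := ℝ) (Set.range e)) ?_
    calc (Set.range e).toFinset.card ≤ Fintype.card (Finset (Fin n)) := by
          rw [Set.toFinset_range]
          exact le_trans (Finset.card_image_le) (by simp)
      _ = 2 ^ n := by simp [Fintype.card_finset]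
  omega
end

section
/- If P = {(A_i^{(1)}, ..., A_i^{(d)}) : i in [m]} is a skew Bollobás system of d-tuples of subspaces of V ≅ ℝ^n with dim(A_i^{(ℓ)}) = a_ℓ for every i and ℓ, then m ≤ the multinomial coefficient binom(a_1 + ... + a_d; a_1, ..., a_d). -/
set_option linter.unusedSectionVars false


open Module Submodule Function

section avoid
variable {V : Type*} [AddCommGroup V] [Module ℝ V]

lemma exists_avoid (S : Finset (Submodule ℝ V)) (hS : ∀ p ∈ S, p ≠ ⊤) :
    ∃ v : V, ∀ p ∈ S, v ∉ p := by
  by_contra h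
  push_neg at h
  have hcov : ⋃ p ∈ S, ((p : Submodule ℝ V) : Set V) = Set.univ := by
    ext v
    simp only [Set.mem_iUnion, Set.mem_univ, iff_true]
    obtain ⟨p, hp, hv⟩ := h v
    exact ⟨p, hp, hv⟩
  obtain ⟨k, hk, hfi⟩ := Submodule.exists_finiteIndex_of_cover hcov
  have hlt : k < ⊤ := (hS k hk).lt_top
  have hnt : Nontrivial (V ⧸ k) := Submodule.Quotient.nontrivial_iff.mpr hlt.ne
  obtain ⟨x, y, hxy⟩ := hnt
  have hx : x - y ≠ 0 := sub_ne_zero.mpr hxy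
  have hinf : Infinite (V ⧸ k) := Infinite.of_injective _ (smul_left_injective ℝ hx)
  have h0 : k.toAddSubgroup.index = 0 := by
    have : Infinite (V ⧸ k.toAddSubgroup) := hinf
    rw [AddSubgroup.index]
    exact Nat.card_eq_zero_of_infinite
  exact hfi.index_ne_zero h0

variable [FiniteDimensional ℝ V]

lemma exists_disjoint_subspace {ι : Type*} (s : Finset ι) (U : ι → Submodule ℝ V) (N : ℕ)
    (hU : ∀ i ∈ s, finrank ℝ (U i) ≤ N) :
    ∀ r, r ≤ finrank ℝ V - N →
      ∃ K : Submodule ℝ V, finrank ℝ K = r ∧ ∀ i ∈ s, Disjoint (U i) K := by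
  intro r
  induction r with
  | zero =>
    exact fun _ => ⟨⊥, finrank_bot ℝ V, fun i _ => disjoint_bot_right⟩
  | succ r ih =>
    intro hr
    obtain ⟨K, hK, hdis⟩ := ih (le_trans (Nat.le_succ r) hr)
    classical
    set S : Finset (Submodule ℝ V) := insert K (s.image fun i => U i ⊔ K) with hSdef
    have hNn : N + (r + 1) ≤ finrank ℝ V := by omega
    have hproper : ∀ p ∈ S, p ≠ ⊤ := by
      intro p hp
      rw [hSdef, Finset.mem_insert] at hp
      have hple : finrank ℝ p < finrank ℝ V := by
        rcases hp with rfl | hp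
        · omega
        · obtain ⟨i, hi, rfl⟩ := Finset.mem_image.mp hp
          have h1 : finrank ℝ ↥(U i ⊔ K) + finrank ℝ ↥(U i ⊓ K) =
              finrank ℝ (U i) + finrank ℝ K := Submodule.finrank_sup_add_finrank_inf_eq _ _
          have := hU i hi
          omega
      intro htop
      rw [htop, finrank_top] at hple
      omega
    obtain ⟨v, hv⟩ := exists_avoid S hproper
    have hvK : v ∉ K := hv K (Finset.mem_insert_self _ _)
    have hv0 : v ≠ 0 := fun h => hvK (h ▸ K.zero_mem)
    refine ⟨K ⊔ span ℝ {v}, ?_, ?_⟩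
    · have hinf : K ⊓ span ℝ {v} = ⊥ := by
        rw [← disjoint_iff]
        exact (Submodule.disjoint_span_singleton' hv0).mpr hvK
      have h1 : finrank ℝ ↥(K ⊔ span ℝ {v}) + finrank ℝ ↥(K ⊓ span ℝ {v}) =
          finrank ℝ K + finrank ℝ ↥(span ℝ {v}) := Submodule.finrank_sup_add_finrank_inf_eq _ _
      rw [hinf, finrank_bot, finrank_span_singleton hv0] at h1
      omega
    · intro i hi
      rw [disjoint_def]
      intro w hwU hwK'
      obtain ⟨x, hx, y, hy, rfl⟩ := Submodule.mem_sup.mp hwK'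
      obtain ⟨c, rfl⟩ := Submodule.mem_span_singleton.mp hy
      by_cases hc : c = 0
      · subst hc
        rw [zero_smul, add_zero] at hwU ⊢
        exact (disjoint_def.mp (hdis i hi)) x hwU hx
      · exfalso
        apply hv (U i ⊔ K) (Finset.mem_insert_of_mem (Finset.mem_image_of_mem _ hi))
        have : c • v = (x + c • v) - x := by abel
        have hmem : c • v ∈ U i ⊔ K :=
          this ▸ Submodule.sub_mem _ (Submodule.mem_sup_left hwU) (Submodule.mem_sup_right hx)
        have := Submodule.smul_mem _ c⁻¹ hmem
        rwa [inv_smul_smul₀ hc] at this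

lemma exists_proj {ι : Type*} (s : Finset ι) (U : ι → Submodule ℝ V) (N : ℕ)
    (hN : N ≤ finrank ℝ V) (hU : ∀ i ∈ s, finrank ℝ (U i) ≤ N) :
    ∃ π : V →ₗ[ℝ] (Fin N → ℝ), ∀ i ∈ s, Disjoint (U i) (LinearMap.ker π) := by
  obtain ⟨K, hK, hdis⟩ := exists_disjoint_subspace s U N hU (finrank ℝ V - N) le_rfl
  have hq : finrank ℝ (V ⧸ K) = finrank ℝ (Fin N → ℝ) := by
    have h1 := K.finrank_quotient_add_finrank
    rw [Module.finrank_fintype_fun_eq_card, Fintype.card_fin]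
    omega
  let e : (V ⧸ K) ≃ₗ[ℝ] (Fin N → ℝ) := LinearEquiv.ofFinrankEq _ _ hq
  refine ⟨e.toLinearMap ∘ₗ K.mkQ, fun i hi => ?_⟩
  have hker : LinearMap.ker (e.toLinearMap ∘ₗ K.mkQ) = K := by
    rw [LinearMap.ker_comp, LinearEquiv.ker, Submodule.comap_bot, Submodule.ker_mkQ]
  rw [hker]
  exact hdis i hi

end avoid


open Module Submodule Function Finset

namespace SkewBollobas

variable {Nn k : ℕ}

noncomputable def minorAlt (S : Finset (Fin Nn)) (hS : S.card = k) :
    ((Fin Nn → ℝ) [⋀^Fin k]→ₗ[ℝ] ℝ) :=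
  (Matrix.detRowAlternating).compLinearMap
    (LinearMap.funLeft ℝ ℝ (fun q : Fin k => (S.orderIsoOfFin hS q : Fin Nn)))

lemma minorAlt_apply (S : Finset (Fin Nn)) (hS : S.card = k) (w : Fin k → (Fin Nn → ℝ)) :
    minorAlt S hS w = Matrix.det (Matrix.of fun p q => w p (S.orderIsoOfFin hS q)) := rfl

variable {J : Type*} [DecidableEq J] [Fintype J]

lemma elim_update (w : Fin k → (Fin Nn → ℝ)) (u : J → (Fin Nn → ℝ))
    (ind : (Fin k ⊕ J) ≃ Fin Nn) (p : Fin k) (x : Fin Nn → ℝ) :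
    Sum.elim (update w p x) u ∘ ind.symm
      = update (Sum.elim w u ∘ ind.symm) (ind (Sum.inl p)) x := by
  classical
  rw [← Sum.update_elim_inl, Function.update_comp_equiv, Equiv.symm_symm]

noncomputable def GAlt (ind : (Fin k ⊕ J) ≃ Fin Nn) (u : J → (Fin Nn → ℝ)) :
    ((Fin Nn → ℝ) [⋀^Fin k]→ₗ[ℝ] ℝ) where
  toFun w := Matrix.detRowAlternating (Sum.elim w u ∘ ind.symm)
  map_update_add' := by
    intro inst w p x y
    obtain rfl := Subsingleton.elim inst (instDecidableEqFin k)
    simp only [elim_update]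
    exact Matrix.detRowAlternating.map_update_add _ (ind (Sum.inl p)) x y
  map_update_smul' := by
    intro inst w p c x
    obtain rfl := Subsingleton.elim inst (instDecidableEqFin k)
    simp only [elim_update]
    exact Matrix.detRowAlternating.map_update_smul _ (ind (Sum.inl p)) c x
  map_eq_zero_of_eq' := by
    intro w p q hpq hne
    refine Matrix.detRowAlternating.map_eq_zero_of_eq _
      (?_ : (Sum.elim w u ∘ ind.symm) (ind (Sum.inl p)) = (Sum.elim w u ∘ ind.symm) (ind (Sum.inl q)))
      (fun h => hne (Sum.inl_injective (ind.injective h)))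
    simp [hpq]

lemma GAlt_apply (ind : (Fin k ⊕ J) ≃ Fin Nn) (u : J → (Fin Nn → ℝ)) (w : Fin k → (Fin Nn → ℝ)) :
    GAlt ind u w = Matrix.det (Matrix.of (Sum.elim w u ∘ ind.symm)) := rfl


lemma altmap_sum_apply {α : Type*} (s : Finset α) (f : α → ((Fin Nn → ℝ) [⋀^Fin k]→ₗ[ℝ] ℝ))
    (v : Fin k → (Fin Nn → ℝ)) :
    (∑ x ∈ s, f x) v = ∑ x ∈ s, f x v := by
  induction s using Finset.cons_induction with
  | empty => simp
  | cons a s ha ih => rw [Finset.sum_cons, Finset.sum_cons, AlternatingMap.add_apply, ih]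

lemma alt_expansion (F : (Fin Nn → ℝ) [⋀^Fin k]→ₗ[ℝ] ℝ) (w : Fin k → (Fin Nn → ℝ)) :
    F w = ∑ S : {s : Finset (Fin Nn) // s.card = k},
      minorAlt S.1 S.2 w * F (fun q => Pi.single ((S.1.orderIsoOfFin S.2 q : Fin Nn)) 1) := by
  classical
  have key : F = ∑ S : {s : Finset (Fin Nn) // s.card = k},
      F (fun q => Pi.single ((S.1.orderIsoOfFin S.2 q : Fin Nn)) 1) • minorAlt S.1 S.2 := by
    refine (Pi.basisFun ℝ (Fin Nn)).ext_alternating (fun v hv => ?_)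
    set S₀ : Finset (Fin Nn) := Finset.image v Finset.univ with hS₀def
    have hS₀ : S₀.card = k := by
      rw [hS₀def, Finset.card_image_of_injective _ hv, Finset.card_univ, Fintype.card_fin]
    have hmem : ∀ q : Fin k, v q ∈ S₀ := fun q => Finset.mem_image_of_mem _ (Finset.mem_univ q)
    set σfun : Fin k → Fin k := fun q => (S₀.orderIsoOfFin hS₀).symm ⟨v q, hmem q⟩ with hσdef
    have hσv : ∀ q, ((S₀.orderIsoOfFin hS₀ (σfun q) : S₀) : Fin Nn) = v q := by
      intro q
      rw [hσdef]
      simp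
    have hσinj : Function.Injective σfun := by
      intro q q' h
      apply hv
      rw [← hσv q, ← hσv q', h]
    let σ : Equiv.Perm (Fin k) := Equiv.ofBijective σfun (Finite.injective_iff_bijective.mp hσinj)
    have hσ : ∀ q, σ q = σfun q := fun q => rfl
    rw [altmap_sum_apply]
    rw [Finset.sum_eq_single (⟨S₀, hS₀⟩ : {s : Finset (Fin Nn) // s.card = k})]
    · -- main term
      rw [AlternatingMap.smul_apply]
      have hM : (Matrix.of fun p q => (fun i => (Pi.basisFun ℝ (Fin Nn)) (v i)) p
          ((S₀.orderIsoOfFin hS₀ q : S₀) : Fin Nn)) = σ.permMatrix ℝ := by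
        ext p q
        show (Pi.basisFun ℝ (Fin Nn)) (v p) ((S₀.orderIsoOfFin hS₀ q : S₀) : Fin Nn)
          = Equiv.Perm.permMatrix ℝ σ p q
        rw [Pi.basisFun_apply, Equiv.Perm.permMatrix, PEquiv.toMatrix_apply,
          Equiv.toPEquiv_apply, Pi.single_apply]
        have hiff : ((S₀.orderIsoOfFin hS₀ q : S₀) : Fin Nn) = v p ↔ q = σ p := by
          rw [← hσv p, hσ]
          constructor
          · intro h
            exact (S₀.orderIsoOfFin hS₀).injective (Subtype.coe_injective h)
          · intro h; rw [h]
        by_cases h : q = σ p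
        · rw [if_pos (hiff.mpr h), if_pos (by simp [h])]
        · rw [if_neg (fun hh => h (hiff.mp hh)), if_neg (by simpa [eq_comm] using h)]
      have hdet : minorAlt S₀ hS₀ (fun i => (Pi.basisFun ℝ (Fin Nn)) (v i))
          = ((Equiv.Perm.sign σ : ℤ) : ℝ) := by
        rw [minorAlt_apply, hM, Matrix.det_permutation]
        try simp
      have hF : F (fun i => (Pi.basisFun ℝ (Fin Nn)) (v i))
          = Equiv.Perm.sign σ • F (fun q => (Pi.basisFun ℝ (Fin Nn)) ((S₀.orderIsoOfFin hS₀ q : S₀) : Fin Nn)) := by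
        have hveq : (fun i => (Pi.basisFun ℝ (Fin Nn)) (v i))
            = (fun q => (Pi.basisFun ℝ (Fin Nn)) ((S₀.orderIsoOfFin hS₀ q : S₀) : Fin Nn)) ∘ σ := by
          funext i
          simp only [Function.comp_apply, hσ, hσv]
        rw [hveq]
        exact F.map_perm _ σ
      rw [hdet, hF]
      simp only [Pi.basisFun_apply]
      rcases Int.units_eq_one_or (Equiv.Perm.sign σ) with h | h <;> rw [h] <;> simp
    · -- other terms vanish
      intro S _ hSne
      rw [AlternatingMap.smul_apply]
      have : ∃ p : Fin k, v p ∉ S.1 := by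
        by_contra hall
        push_neg at hall
        apply hSne
        have hsub : S₀ ⊆ S.1 := by
          intro x hx
          obtain ⟨q, _, rfl⟩ := Finset.mem_image.mp hx
          exact hall q
        have : S₀ = S.1 := Finset.eq_of_subset_of_card_le hsub (by rw [hS₀, S.2])
        exact Subtype.ext this.symm
      obtain ⟨p, hp⟩ := this
      have hrow : minorAlt S.1 S.2 (fun i => (Pi.basisFun ℝ (Fin Nn)) (v i)) = 0 := by
        rw [minorAlt_apply]
        apply Matrix.det_eq_zero_of_row_eq_zero p
        intro q
        rw [Matrix.of_apply, Pi.basisFun_apply]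
        apply Pi.single_eq_of_ne
        intro h
        exact hp (h ▸ (S.1.orderIsoOfFin S.2 q).2)
      rw [hrow, smul_zero]
    · intro h
      exact absurd (Finset.mem_univ _) h
  conv_lhs => rw [key]
  rw [altmap_sum_apply]
  congr 1
  funext S
  rw [AlternatingMap.smul_apply]
  simp [mul_comm]

end SkewBollobas


open Finset Nat

namespace SkewBollobas

lemma ico_prod_choose (d : ℕ) (f : ℕ → ℕ) :
    ∀ c j, j ≤ d → d - j = c →
      (∏ k ∈ Finset.Ico j d, Nat.choose (∑ t ∈ Finset.Ico k d, f t) (f k))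
        * ∏ k ∈ Finset.Ico j d, (f k)! = (∑ t ∈ Finset.Ico j d, f t)! := by
  intro c
  induction c with
  | zero =>
    intro j hj hc
    have : j = d := by omega
    subst this
    simp
  | succ c ih =>
    intro j hj hc
    have hjd : j < d := by omega
    have h1 : ∑ t ∈ Finset.Ico j d, f t = f j + ∑ t ∈ Finset.Ico (j+1) d, f t :=
      Finset.sum_eq_sum_Ico_succ_bot hjd f
    have h2 : ∏ k ∈ Finset.Ico j d, Nat.choose (∑ t ∈ Finset.Ico k d, f t) (f k)
        = Nat.choose (∑ t ∈ Finset.Ico j d, f t) (f j)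
          * ∏ k ∈ Finset.Ico (j+1) d, Nat.choose (∑ t ∈ Finset.Ico k d, f t) (f k) :=
      Finset.prod_eq_prod_Ico_succ_bot hjd _
    have h3 : ∏ k ∈ Finset.Ico j d, (f k)! = (f j)! * ∏ k ∈ Finset.Ico (j+1) d, (f k)! :=
      Finset.prod_eq_prod_Ico_succ_bot hjd _
    have hIH := ih (j+1) (by omega) (by omega)
    set s := ∑ t ∈ Finset.Ico (j+1) d, f t
    have hch : Nat.choose (f j + s) (f j) * (f j)! * s ! = (f j + s)! := by
      have := Nat.choose_mul_factorial_mul_factorial (Nat.le_add_right (f j) s)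
      simpa using this
    rw [h2, h3, h1]
    calc Nat.choose (f j + s) (f j) * (∏ k ∈ Finset.Ico (j+1) d, Nat.choose (∑ t ∈ Finset.Ico k d, f t) (f k))
          * ((f j)! * ∏ k ∈ Finset.Ico (j+1) d, (f k)!)
        = Nat.choose (f j + s) (f j) * (f j)!
          * ((∏ k ∈ Finset.Ico (j+1) d, Nat.choose (∑ t ∈ Finset.Ico k d, f t) (f k))
             * ∏ k ∈ Finset.Ico (j+1) d, (f k)!) := by ring
      _ = Nat.choose (f j + s) (f j) * (f j)! * s ! := by rw [hIH]
      _ = (f j + s)! := hch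

lemma multinomial_eq_prod_choose (d : ℕ) (a : Fin d → ℕ) :
    Nat.multinomial Finset.univ a
      = ∏ ℓ : Fin d, Nat.choose (∑ t ∈ Finset.univ.filter (fun t => ℓ ≤ t), a t) (a ℓ) := by
  classical
  set f : ℕ → ℕ := fun k => if h : k < d then a ⟨k, h⟩ else 0 with hf
  have hfa : ∀ i : Fin d, f i.val = a i := by
    intro i
    simp [hf, i.isLt]
  have hsum : ∑ i : Fin d, a i = ∑ k ∈ Finset.range d, f k := by
    rw [← Fin.sum_univ_eq_sum_range]
    exact Finset.sum_congr rfl fun i _ => (hfa i).symm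
  have hprodfac : ∏ i : Fin d, (a i)! = ∏ k ∈ Finset.range d, (f k)! := by
    rw [← Fin.prod_univ_eq_prod_range]
    exact Finset.prod_congr rfl fun i _ => by rw [hfa i]
  have hfilter : ∀ ℓ : Fin d, ∑ t ∈ Finset.univ.filter (fun t => ℓ ≤ t), a t
      = ∑ t ∈ Finset.Ico ℓ.val d, f t := by
    intro ℓ
    have h1 : (Finset.range d).filter (fun k => ℓ.val ≤ k) = Finset.Ico ℓ.val d := by
      ext x
      simp [Finset.mem_filter, Finset.mem_range, Finset.mem_Ico, and_comm]
    rw [← h1, Finset.sum_filter, Finset.sum_filter, ← Fin.sum_univ_eq_sum_range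
      (fun k => if ℓ.val ≤ k then f k else 0)]
    refine Finset.sum_congr rfl fun i _ => ?_
    rw [hfa i]
    rcases le_or_gt ℓ i with h | h
    · rw [if_pos h, if_pos (Fin.le_def.mp h)]
    · rw [if_neg (not_le.mpr h), if_neg (by rw [not_le]; exact Fin.lt_def.mp h)]
  have hprodch : ∏ ℓ : Fin d, Nat.choose (∑ t ∈ Finset.univ.filter (fun t => ℓ ≤ t), a t) (a ℓ)
      = ∏ k ∈ Finset.range d, Nat.choose (∑ t ∈ Finset.Ico k d, f t) (f k) := by
    rw [← Fin.prod_univ_eq_prod_range]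
    refine Finset.prod_congr rfl fun i _ => ?_
    rw [hfilter i, hfa i]
  have hmain := ico_prod_choose d f (d - 0) 0 (Nat.zero_le d) rfl
  simp only [Nat.Ico_zero_eq_range] at hmain
  have hspec := Nat.multinomial_spec Finset.univ a
  have hpos : 0 < ∏ i : Fin d, (a i)! := Finset.prod_pos fun i _ => Nat.factorial_pos _
  have : (∏ i : Fin d, (a i)!) * Nat.multinomial Finset.univ a
      = (∏ i : Fin d, (a i)!) * ∏ ℓ : Fin d, Nat.choose (∑ t ∈ Finset.univ.filter (fun t => ℓ ≤ t), a t) (a ℓ) := by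
    rw [hspec, hprodch, hsum, hprodfac, ← hmain]
    ring
  exact Nat.eq_of_mul_eq_mul_left hpos this

end SkewBollobas


open Module Function

namespace SkewBollobas

lemma det_ne_zero_of_rows_li {q : ℕ} (rows : Fin q → Fin q → ℝ)
    (h : LinearIndependent ℝ rows) : (Matrix.of rows).det ≠ 0 := by
  intro hdet
  obtain ⟨v, hv0, hvA⟩ := Matrix.exists_vecMul_eq_zero_iff.mpr hdet
  have hsum : ∑ r, v r • rows r = 0 := by
    funext c
    have := congrFun hvA c
    rw [Matrix.vecMul, dotProduct] at this
    simpa [Finset.sum_apply, Matrix.of_apply, mul_comm] using this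
  have := Fintype.linearIndependent_iff.mp h v hsum
  exact hv0 (funext this)

lemma det_eq_zero_of_rows_dep {q : ℕ} (rows : Fin q → Fin q → ℝ)
    (h : ¬ LinearIndependent ℝ rows) : (Matrix.of rows).det = 0 := by
  obtain ⟨g, hsum, i, hgi⟩ := Fintype.not_linearIndependent_iff.mp h
  rw [← Matrix.exists_vecMul_eq_zero_iff]
  refine ⟨g, fun h0 => hgi (congrFun h0 i), ?_⟩
  funext c
  rw [Matrix.vecMul, dotProduct]
  have := congrFun hsum c
  simpa [Finset.sum_apply, mul_comm] using this

lemma li_of_triangular {m : ℕ} {T : Type*} [AddCommGroup T] [Module ℝ T]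
    (x : Fin m → T) (f : Fin m → (T →ₗ[ℝ] ℝ))
    (hdiag : ∀ i, f i (x i) ≠ 0) (htri : ∀ i j, i < j → f j (x i) = 0) :
    LinearIndependent ℝ x := by
  classical
  rw [Fintype.linearIndependent_iff]
  intro g hg
  by_contra hne
  push_neg at hne
  obtain ⟨i0, hi0⟩ := hne
  set s : Finset (Fin m) := Finset.univ.filter (fun i => g i ≠ 0) with hs
  have hsne : s.Nonempty := ⟨i0, by simp [hs, hi0]⟩
  set j := s.max' hsne with hj
  have hjs : j ∈ s := s.max'_mem hsne
  have hgj : g j ≠ 0 := (Finset.mem_filter.mp hjs).2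
  have happ : f j (∑ i, g i • x i) = 0 := by rw [hg, map_zero]
  rw [map_sum] at happ
  have hterm : ∀ i ∈ Finset.univ, i ≠ j → f j (g i • x i) = 0 := by
    intro i _ hij
    by_cases hgi : g i = 0
    · rw [hgi, zero_smul, map_zero]
    · have his : i ∈ s := by simp [hs, hgi]
      have : i ≤ j := s.le_max' i his
      rw [map_smul, htri i j (lt_of_le_of_ne this hij), smul_zero]
  rw [Finset.sum_eq_single j hterm (fun h => absurd (Finset.mem_univ j) h)] at happ
  rw [map_smul, smul_eq_mul] at happ
  exact hdiag j (by
    rcases mul_eq_zero.mp happ with h | h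
    · exact absurd h hgj
    · exact h) |>.elim

end SkewBollobas


open Module Submodule Function SkewBollobas

theorem skew_bollobas_subspace_tuples_uniform (n m d : ℕ)
    (V : Type*) [AddCommGroup V] [Module ℝ V] [FiniteDimensional ℝ V]
    (hV : Module.finrank ℝ V = n)
    (A : Fin m → Fin d → Submodule ℝ V)
    (hdirect : ∀ i, Module.finrank ℝ ↥(⨆ ℓ, A i ℓ) = ∑ ℓ, Module.finrank ℝ ↥(A i ℓ))
    (hcross : ∀ i j, i < j → ∃ s t : Fin d, s < t ∧ 0 < Module.finrank ℝ ↥(A i s ⊓ A j t))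
    (a : Fin d → ℕ)
    (ha : ∀ i ℓ, Module.finrank ℝ ↥(A i ℓ) = a ℓ) :
    m ≤ Nat.multinomial Finset.univ a := by
  classical
  rcases Nat.eq_zero_or_pos m with rfl | hm
  · exact Nat.zero_le _
  have i₀ : Fin m := ⟨0, hm⟩
  -- concatenated basis families
  have bas : ∀ i ℓ, Basis (Fin (a ℓ)) ℝ ↥(A i ℓ) :=
    fun i ℓ => Module.finBasisOfFinrankEq ℝ _ (ha i ℓ)
  set vfam : Fin m → (Σ t : Fin d, Fin (a t)) → V :=
    fun i p => ((bas i p.1) p.2 : V) with hvfam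
  have hAspan : ∀ i ℓ, span ℝ (Set.range fun k : Fin (a ℓ) => vfam i ⟨ℓ, k⟩) = A i ℓ := by
    intro i ℓ
    have h1 : (Set.range fun k : Fin (a ℓ) => vfam i ⟨ℓ, k⟩)
        = (A i ℓ).subtype '' (Set.range (bas i ℓ)) := by
      rw [← Set.range_comp]; rfl
    rw [h1, Submodule.span_image, Basis.span_eq, Submodule.map_subtype_top]
  have hli : ∀ i, LinearIndependent ℝ (vfam i) := by
    intro i
    rw [linearIndependent_iff_card_eq_finrank_span]
    have hspan : span ℝ (Set.range (vfam i)) = ⨆ ℓ, A i ℓ := by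
      apply le_antisymm
      · rw [Submodule.span_le]
        rintro v ⟨⟨ℓ, k⟩, rfl⟩
        exact le_iSup (A i) ℓ (SetLike.coe_mem _)
      · refine iSup_le fun ℓ => ?_
        rw [← hAspan i ℓ]
        refine Submodule.span_mono ?_
        rintro v ⟨k, rfl⟩
        exact ⟨⟨ℓ, k⟩, rfl⟩
    have h2 : (Set.range (vfam i)).finrank ℝ = finrank ℝ ↥(⨆ ℓ, A i ℓ) := by
      rw [Set.finrank, hspan]
    rw [h2, hdirect i, Fintype.card_sigma]
    simp only [Fintype.card_fin]
    exact Finset.sum_congr rfl fun ℓ _ => (ha i ℓ).symm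
  -- index bookkeeping
  set Nl : Fin d → ℕ := fun ℓ => ∑ t ∈ Finset.univ.filter (fun t => ℓ ≤ t), a t with hNl
  have hcardJ : ∀ ℓ : Fin d, Fintype.card {p : (Σ t : Fin d, Fin (a t)) // ℓ < p.1}
      = ∑ t ∈ Finset.univ.filter (fun t => ℓ < t), a t := by
    intro ℓ
    let e : {p : (Σ t : Fin d, Fin (a t)) // ℓ < p.1} ≃ (Σ t : {t : Fin d // ℓ < t}, Fin (a t.1)) :=
      { toFun := fun p => ⟨⟨p.1.1, p.2⟩, p.1.2⟩
        invFun := fun q => ⟨⟨q.1.1, q.2⟩, q.1.2⟩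
        left_inv := fun p => rfl
        right_inv := fun q => rfl }
    rw [Fintype.card_congr e, Fintype.card_sigma]
    simp only [Fintype.card_fin]
    exact (Finset.sum_subtype _ (by intro x; simp) a).symm
  have hcardK : ∀ ℓ : Fin d,
      Fintype.card (Fin (a ℓ) ⊕ {p : (Σ t : Fin d, Fin (a t)) // ℓ < p.1}) = Nl ℓ := by
    intro ℓ
    rw [Fintype.card_sum, Fintype.card_fin, hcardJ ℓ]
    have hsplit : Finset.univ.filter (fun t => ℓ ≤ t)
        = insert ℓ (Finset.univ.filter (fun t => ℓ < t)) := by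
      ext t
      simp only [Finset.mem_filter, Finset.mem_insert, Finset.mem_univ, true_and]
      constructor
      · intro h
        rcases eq_or_lt_of_le h with h | h
        · exact Or.inl h.symm
        · exact Or.inr h
      · rintro (rfl | h)
        · exact le_refl _
        · exact le_of_lt h
    rw [hNl]
    simp only []
    rw [hsplit, Finset.sum_insert (by simp)]
  set emb : ∀ ℓ : Fin d, (Fin (a ℓ) ⊕ {p : (Σ t : Fin d, Fin (a t)) // ℓ < p.1})
      → (Σ t : Fin d, Fin (a t)) := fun ℓ => Sum.elim (fun k => ⟨ℓ, k⟩) Subtype.val with hemb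
  have hembinj : ∀ ℓ, Injective (emb ℓ) := by
    intro ℓ x y hxy
    simp only [hemb] at hxy
    match x, y, hxy with
    | Sum.inl k, Sum.inl k', hxy =>
      simp only [Sum.elim_inl] at hxy
      injection hxy with h1 h2
      rw [h2]
    | Sum.inl k, Sum.inr p, hxy =>
      exfalso
      simp only [Sum.elim_inl, Sum.elim_inr] at hxy
      have hp := p.2
      rw [← hxy] at hp
      exact lt_irrefl ℓ hp
    | Sum.inr p, Sum.inl k, hxy =>
      exfalso
      simp only [Sum.elim_inl, Sum.elim_inr] at hxy
      have hp := p.2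
      rw [hxy] at hp
      exact lt_irrefl ℓ hp
    | Sum.inr p, Sum.inr p', hxy =>
      simp only [Sum.elim_inr] at hxy
      rw [Sum.inr.injEq]
      exact Subtype.ext hxy
  set U : Fin m → Fin d → Submodule ℝ V :=
    fun i ℓ => span ℝ (Set.range (vfam i ∘ emb ℓ)) with hU
  have hUrank : ∀ i ℓ, finrank ℝ (U i ℓ) = Nl ℓ := by
    intro i ℓ
    rw [hU]
    rw [finrank_span_eq_card ((hli i).comp (emb ℓ) (hembinj ℓ))]
    exact hcardK ℓ
  have hNln : ∀ ℓ, Nl ℓ ≤ finrank ℝ V := fun ℓ => (hUrank i₀ ℓ) ▸ (U i₀ ℓ).finrank_le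
  have hπ : ∀ ℓ : Fin d, ∃ π : V →ₗ[ℝ] (Fin (Nl ℓ) → ℝ),
      ∀ i ∈ Finset.univ, Disjoint (U i ℓ) (LinearMap.ker π) :=
    fun ℓ => exists_proj Finset.univ (fun i => U i ℓ) (Nl ℓ) (hNln ℓ)
      (fun i _ => le_of_eq (hUrank i ℓ))
  choose π hπdis using hπ
  set ind : ∀ ℓ : Fin d, (Fin (a ℓ) ⊕ {p : (Σ t : Fin d, Fin (a t)) // ℓ < p.1}) ≃ Fin (Nl ℓ) :=
    fun ℓ => Fintype.equivFinOfCardEq (hcardK ℓ) with hind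
  set w : Fin m → ∀ ℓ : Fin d, Fin (a ℓ) → (Fin (Nl ℓ) → ℝ) :=
    fun i ℓ k => π ℓ (vfam i ⟨ℓ, k⟩) with hw
  set u : Fin m → ∀ ℓ : Fin d, {p : (Σ t : Fin d, Fin (a t)) // ℓ < p.1} → (Fin (Nl ℓ) → ℝ) :=
    fun j ℓ p => π ℓ (vfam j p.1) with hu
  have helim : ∀ i ℓ, Sum.elim (w i ℓ) (u i ℓ) = (π ℓ) ∘ (vfam i) ∘ (emb ℓ) := by
    intro i ℓ
    funext p
    cases p <;> rfl
  set G : Fin m → ∀ ℓ : Fin d, ((Fin (Nl ℓ) → ℝ) [⋀^Fin (a ℓ)]→ₗ[ℝ] ℝ) :=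
    fun j ℓ => GAlt (ind ℓ) (u j ℓ) with hG
  -- diagonal factors non-vanishing
  have hdiagfac : ∀ j ℓ, G j ℓ (w j ℓ) ≠ 0 := by
    intro j ℓ
    rw [hG]
    simp only []
    rw [GAlt_apply]
    apply det_ne_zero_of_rows_li
    rw [helim]
    have h1 : LinearIndependent ℝ (vfam j ∘ emb ℓ) := (hli j).comp (emb ℓ) (hembinj ℓ)
    have h2 : LinearIndependent ℝ ((π ℓ) ∘ (vfam j ∘ emb ℓ)) := by
      apply h1.map
      have hd := hπdis ℓ j (Finset.mem_univ j)
      simp only [hU] at hd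
      exact hd
    exact (linearIndependent_equiv (ind ℓ).symm).mpr h2
  -- off-diagonal factor vanishing
  have hofffac : ∀ i j, i < j → ∃ s : Fin d, G j s (w i s) = 0 := by
    intro i j hij
    obtain ⟨s, t, hst, hrank⟩ := hcross i j hij
    refine ⟨s, ?_⟩
    rw [hG]
    simp only []
    rw [GAlt_apply]
    apply det_eq_zero_of_rows_dep
    intro hrows
    have hlisum : LinearIndependent ℝ (Sum.elim (w i s) (u j s)) :=
      (linearIndependent_equiv (ind s).symm).mp hrows
    rw [linearIndependent_sum] at hlisum
    obtain ⟨-, -, hdisj⟩ := hlisum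
    obtain ⟨xv, hxv_mem, hxv0⟩ : ∃ xv ∈ A i s ⊓ A j t, xv ≠ 0 := by
      have hne : (A i s ⊓ A j t) ≠ ⊥ := by
        intro h
        rw [h] at hrank
        simp [finrank_bot] at hrank
      exact Submodule.exists_mem_ne_zero_of_ne_bot hne
    have hxAis : xv ∈ A i s := (Submodule.mem_inf.mp hxv_mem).1
    have hxAjt : xv ∈ A j t := (Submodule.mem_inf.mp hxv_mem).2
    have hy0 : π s xv ≠ 0 := by
      intro h0
      have hxU : xv ∈ U i s := by
        rw [hU]
        rw [← hAspan i s] at hxAis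
        refine Submodule.span_mono ?_ hxAis
        rintro v ⟨k, rfl⟩
        exact ⟨Sum.inl k, rfl⟩
      exact hxv0 (Submodule.disjoint_def.mp (hπdis s i (Finset.mem_univ i)) xv hxU h0)
    have hyw : π s xv ∈ span ℝ (Set.range (w i s)) := by
      have h1 : Set.range (w i s) = (π s) '' (Set.range fun k : Fin (a s) => vfam i ⟨s, k⟩) := by
        rw [← Set.range_comp]; rfl
      rw [h1, Submodule.span_image, hAspan i s]
      exact Submodule.mem_map_of_mem hxAis
    have hyu : π s xv ∈ span ℝ (Set.range (u j s)) := by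
      have h1 : Set.range (u j s)
          = (π s) '' (Set.range fun p : {p : (Σ t' : Fin d, Fin (a t')) // s < p.1} => vfam j p.1) := by
        rw [← Set.range_comp]; rfl
      rw [h1, Submodule.span_image]
      refine Submodule.mem_map_of_mem ?_
      rw [← hAspan j t] at hxAjt
      refine Submodule.span_mono ?_ hxAjt
      rintro v ⟨k, rfl⟩
      exact ⟨⟨⟨t, k⟩, hst⟩, rfl⟩
    exact hy0 (Submodule.disjoint_def.mp hdisj _ hyw hyu)
  -- the tensor-like space
  set x : Fin m → ((∀ ℓ : Fin d, {S : Finset (Fin (Nl ℓ)) // S.card = a ℓ}) → ℝ) :=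
    fun i c => ∏ ℓ, minorAlt (c ℓ).1 (c ℓ).2 (w i ℓ) with hx
  set coef : Fin m → ∀ ℓ : Fin d, {S : Finset (Fin (Nl ℓ)) // S.card = a ℓ} → ℝ :=
    fun j ℓ S => G j ℓ (fun q => Pi.single ((S.1.orderIsoOfFin S.2 q : Fin (Nl ℓ))) 1) with hcoef
  set f : Fin m → (((∀ ℓ : Fin d, {S : Finset (Fin (Nl ℓ)) // S.card = a ℓ}) → ℝ) →ₗ[ℝ] ℝ) :=
    fun j => ∑ c : (∀ ℓ : Fin d, {S : Finset (Fin (Nl ℓ)) // S.card = a ℓ}),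
      (∏ ℓ, coef j ℓ (c ℓ)) • LinearMap.proj c with hf
  have hpair : ∀ i j, f j (x i) = ∏ ℓ, G j ℓ (w i ℓ) := by
    intro i j
    rw [hf]
    simp only [LinearMap.sum_apply, LinearMap.smul_apply, LinearMap.proj_apply, smul_eq_mul]
    have hterm : ∀ c : (∀ ℓ : Fin d, {S : Finset (Fin (Nl ℓ)) // S.card = a ℓ}),
        (∏ ℓ, coef j ℓ (c ℓ)) * (x i c)
          = ∏ ℓ, (minorAlt (c ℓ).1 (c ℓ).2 (w i ℓ) * coef j ℓ (c ℓ)) := by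
      intro c
      rw [hx]
      simp only []
      rw [← Finset.prod_mul_distrib]
      exact Finset.prod_congr rfl fun ℓ _ => mul_comm _ _
    rw [Finset.sum_congr rfl (fun c _ => hterm c)]
    have hexp : ∀ ℓ : Fin d, G j ℓ (w i ℓ)
        = ∑ S : {S : Finset (Fin (Nl ℓ)) // S.card = a ℓ},
            minorAlt S.1 S.2 (w i ℓ) * coef j ℓ S := by
      intro ℓ
      simp only [hcoef]
      exact alt_expansion (G j ℓ) (w i ℓ)
    rw [Finset.prod_congr rfl (fun ℓ _ => hexp ℓ), Finset.prod_univ_sum, Fintype.piFinset_univ]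
  have hdiag : ∀ j, f j (x j) ≠ 0 := by
    intro j
    rw [hpair]
    rw [Finset.prod_ne_zero_iff]
    exact fun ℓ _ => hdiagfac j ℓ
  have htri : ∀ i j, i < j → f j (x i) = 0 := by
    intro i j hij
    obtain ⟨s, hs⟩ := hofffac i j hij
    rw [hpair]
    exact Finset.prod_eq_zero (Finset.mem_univ s) hs
  have hLI := li_of_triangular x f hdiag htri
  have hcard := hLI.fintype_card_le_finrank
  rw [Fintype.card_fin, Module.finrank_fintype_fun_eq_card, Fintype.card_pi] at hcard
  have hch : ∀ ℓ : Fin d, Fintype.card {S : Finset (Fin (Nl ℓ)) // S.card = a ℓ}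
      = Nat.choose (Nl ℓ) (a ℓ) := by
    intro ℓ
    rw [Fintype.card_finset_len, Fintype.card_fin]
  rw [Finset.prod_congr rfl (fun ℓ _ => hch ℓ)] at hcard
  rw [multinomial_eq_prod_choose d a]
  exact hcard
end
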